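/- arXiv:2205.01220 — 10 statements merged into one kernel-verified Lean document; each statement's English description precedes it below -/
import Mathlib

section
/- Let A ∈ ℝ^{m×n}, b ∈ ℝ^m, c ∈ ℝ^n, let y ∈ ℝ^m, and let x, s ∈ ℝ^n have strictly positive entries; set μ := xᵀs/n and let β₁ ∈ ℝ. Let W ∈ ℝ^{m×m} be invertible and define M := A D² Aᵀ, σ := b − β₁ μ A S⁻¹ e + A D² (c − Aᵀ y − s), the preconditioned matrix M̂ := W M Wᵀ and right-hand side σ̂ := W σ. Suppose z̃, r̂ ∈ ℝ^m satisfy M̂ z̃ = σ̂ + r̂, and let v ∈ ℝ^n satisfy A v = W⁻¹ r̂. Define Δy := Wᵀ z̃, Δs := c − Aᵀ y − s − Aᵀ Δy, and Δx := β₁ μ S⁻¹ e − x − D² Δs − v. Then M Δy = σ + W⁻¹ r̂, and the triple (Δx, Δy, Δs) satisfies the modified Newton system: A Δx = b − A x, Aᵀ Δy + Δs = c − Aᵀ y − s, and X Δs + S Δx = β₁ μ e − X S e − S v. -/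
open Matrix

/-- the modified normal equation system (MNES) step.  Given a
preconditioner `W` (invertible) and an inexact solution `z̃` of the
preconditioned normal equations with residual `r̂`, the reconstructed
direction `(Δx, Δy, Δs)` satisfies the modified Newton system whose only
perturbation `v` appears in the complementarity equation. -/
theorem mnes_newton_system
    {m n : ℕ}
    (A : Matrix (Fin m) (Fin n) ℝ) (b : Fin m → ℝ) (c : Fin n → ℝ)
    (y : Fin m → ℝ) (x s : Fin n → ℝ)
    (hx : ∀ i, 0 < x i) (hs : ∀ i, 0 < s i)
    (μ β₁ : ℝ) (hμ : μ = (∑ i, x i * s i) / (n : ℝ))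
    (W : Matrix (Fin m) (Fin m) ℝ) (hW : IsUnit W.det)
    (M : Matrix (Fin m) (Fin m) ℝ)
    (hM : M = A * Matrix.diagonal (fun i => x i / s i) * Aᵀ)
    (σ : Fin m → ℝ)
    (hσ : σ = b - (β₁ * μ) • A.mulVec (fun i => (s i)⁻¹)
              + A.mulVec (fun i => (x i / s i) * (c - Aᵀ.mulVec y - s) i))
    (ztilde rhat : Fin m → ℝ)
    (hz : (W * M * Wᵀ).mulVec ztilde = W.mulVec σ + rhat)
    (v : Fin n → ℝ) (hv : A.mulVec v = W⁻¹.mulVec rhat)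
    (Δy : Fin m → ℝ) (hΔy : Δy = Wᵀ.mulVec ztilde)
    (Δs : Fin n → ℝ) (hΔs : Δs = c - Aᵀ.mulVec y - s - Aᵀ.mulVec Δy)
    (Δx : Fin n → ℝ)
    (hΔx : Δx = (β₁ * μ) • (fun i => (s i)⁻¹) - x
                - (fun i => (x i / s i) * Δs i) - v) :
    M.mulVec Δy = σ + W⁻¹.mulVec rhat ∧
    A.mulVec Δx = b - A.mulVec x ∧
    Aᵀ.mulVec Δy + Δs = c - Aᵀ.mulVec y - s ∧
    ∀ i, x i * Δs i + s i * Δx i = β₁ * μ - x i * s i - s i * v i := by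
  have hd : ∀ (d u : Fin n → ℝ),
      (Matrix.diagonal d).mulVec u = fun i => d i * u i := by
    intro d u; ext i; simp [Matrix.mulVec_diagonal]
  have h1 : M.mulVec Δy = σ + W⁻¹.mulVec rhat := by
    have : M.mulVec Δy = W⁻¹.mulVec ((W * M * Wᵀ).mulVec ztilde) := by
      rw [hΔy, Matrix.mulVec_mulVec, Matrix.mulVec_mulVec,
        Matrix.mul_assoc W M Wᵀ, ← Matrix.mul_assoc W⁻¹ W,
        Matrix.nonsing_inv_mul _ hW, Matrix.one_mul]
    rw [this, hz, Matrix.mulVec_add, Matrix.mulVec_mulVec,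
      Matrix.nonsing_inv_mul _ hW, Matrix.one_mulVec]
  refine ⟨h1, ?_, ?_, ?_⟩
  · have hADΔs : A.mulVec (fun i => (x i / s i) * Δs i)
        = A.mulVec (fun i => (x i / s i) * (c - Aᵀ.mulVec y - s) i)
          - M.mulVec Δy := by
      rw [← hd, ← hd, hM, ← Matrix.mulVec_mulVec, ← Matrix.mulVec_mulVec,
        ← Matrix.mulVec_sub, ← Matrix.mulVec_sub]
      congr 1
      rw [hΔs, Matrix.mulVec_sub]
    rw [hΔx, Matrix.mulVec_sub, Matrix.mulVec_sub, Matrix.mulVec_sub,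
      Matrix.mulVec_smul, hADΔs, h1, hv, hσ]
    abel
  · rw [hΔs]; abel
  · intro i
    rw [hΔx]
    have hsi := (hs i).ne'
    simp only [Pi.sub_apply, Pi.smul_apply, smul_eq_mul]
    field_simp
    ring
end

section
/- Let n ≥ 1, let x, s ∈ ℝ^n have strictly positive entries, set μ := xᵀs/n, and let η > 0. Let β : {1,…,m} → {1,…,n} be injective, let r̂ ∈ ℝ^m, and define v ∈ ℝ^n by v_{β(i)} := √(x_{β(i)}/s_{β(i)}) · r̂_i for i = 1,…,m and v_j := 0 for every j not in the image of β. If ‖r̂‖₂ ≤ η √μ / √n, then ‖S v‖_∞ = max_j |s_j v_j| ≤ η μ. -/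
/-! Where `v` is supported, `s_j v_j = √(x_j s_j) · r̂_i`. The first factor is at most
`√(xᵀs) = √(n μ)`, the second at most `‖r̂‖₂ ≤ η √μ / √n`, and the product of the two bounds
is `η μ`. -/

namespace Real

theorem mul_sqrt_div_eq_sqrt_mul {s : ℝ} (hs : 0 ≤ s) (x : ℝ) : s * √(x / s) = √(x * s) := by
  rcases hs.eq_or_lt with rfl | hs
  · simp
  · rw [← sqrt_sq hs.le, ← sqrt_mul (sq_nonneg s), sqrt_sq hs.le]
    congr 1
    field_simp

theorem abs_le_sqrt_sum_sq {ι : Type*} [Fintype ι] (f : ι → ℝ) (i : ι) :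
    |f i| ≤ √(∑ j, f j ^ 2) :=
  abs_le_sqrt <| Finset.single_le_sum (fun j _ => sq_nonneg (f j)) (Finset.mem_univ i)

end Real

open Real

theorem abs_mul_le_sqrt_mul_mul_sqrt_sum_sq {ι κ : Type*} [Fintype κ] (β : κ → ι)
    (x s v : ι → ℝ) (hs : ∀ j, 0 ≤ s j) (r : κ → ℝ)
    (hv_range : ∀ i, v (β i) = √(x (β i) / s (β i)) * r i)
    (hv_compl : ∀ j, (∀ i, β i ≠ j) → v j = 0) (j : ι) :
    |s j * v j| ≤ √(x j * s j) * √(∑ i, r i ^ 2) := by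
  by_cases hj : ∃ i, β i = j
  · obtain ⟨i, rfl⟩ := hj
    rw [hv_range, ← mul_assoc, mul_sqrt_div_eq_sqrt_mul (hs _), abs_mul,
      abs_of_nonneg (sqrt_nonneg _)]
    exact mul_le_mul_of_nonneg_left (abs_le_sqrt_sum_sq r i) (sqrt_nonneg _)
  · rw [hv_compl j (fun i h => hj ⟨i, h⟩), mul_zero, abs_zero]
    positivity

theorem residual_perturbation_bound_general
    {m n : ℕ}
    (x s : Fin n → ℝ) (hx : ∀ i, 0 < x i) (hs : ∀ i, 0 < s i)
    (μ : ℝ) (hμ : μ = (∑ i, x i * s i) / (n : ℝ))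
    (η : ℝ)
    (β : Fin m → Fin n)
    (rhat : Fin m → ℝ)
    (v : Fin n → ℝ)
    (hv1 : ∀ i, v (β i) = Real.sqrt (x (β i) / s (β i)) * rhat i)
    (hv2 : ∀ j, (∀ i, β i ≠ j) → v j = 0)
    (hr : Real.sqrt (∑ i, (rhat i) ^ 2) ≤ η * Real.sqrt μ / Real.sqrt (n : ℝ)) :
    ∀ j, |s j * v j| ≤ η * μ := by
  intro j
  have hn : (0 : ℝ) < n := Nat.cast_pos.mpr (Fin.pos j)
  have hxs : ∀ i, 0 ≤ x i * s i := fun i => (mul_pos (hx i) (hs i)).le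
  have hμ_nonneg : 0 ≤ μ := hμ ▸ div_nonneg (Finset.sum_nonneg fun i _ => hxs i) hn.le
  have hxs_le : x j * s j ≤ n * μ := by
    rw [hμ, mul_div_cancel₀ _ hn.ne']
    exact Finset.single_le_sum (fun i _ => hxs i) (Finset.mem_univ j)
  calc |s j * v j| ≤ √(x j * s j) * √(∑ i, rhat i ^ 2) :=
        abs_mul_le_sqrt_mul_mul_sqrt_sum_sq β x s v (fun i => (hs i).le) rhat hv1 hv2 j
    _ ≤ √(n * μ) * (η * √μ / √n) := by gcongr
    _ = η * μ := by
      rw [sqrt_mul hn.le]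
      field_simp
      rw [sq_sqrt hμ_nonneg, mul_comm]

/-- if the residual `r̂` of the inexactly solved modified normal
equation system satisfies `‖r̂‖₂ ≤ η √μ / √n`, then the induced perturbation
`v` (supported on the basis indices `β i`, with `v (β i) = √(x_{β i}/s_{β i}) r̂ i`)
satisfies `‖S v‖_∞ ≤ η μ`. -/
theorem residual_perturbation_bound
    {m n : ℕ} (hn : 1 ≤ n)
    (x s : Fin n → ℝ) (hx : ∀ i, 0 < x i) (hs : ∀ i, 0 < s i)
    (μ : ℝ) (hμ : μ = (∑ i, x i * s i) / (n : ℝ))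
    (η : ℝ) (hη : 0 < η)
    (β : Fin m → Fin n) (hβ : Function.Injective β)
    (rhat : Fin m → ℝ)
    (v : Fin n → ℝ)
    (hv1 : ∀ i, v (β i) = Real.sqrt (x (β i) / s (β i)) * rhat i)
    (hv2 : ∀ j, (∀ i, β i ≠ j) → v j = 0)
    (hr : Real.sqrt (∑ i, (rhat i) ^ 2) ≤ η * Real.sqrt μ / Real.sqrt (n : ℝ)) :
    ∀ j, |s j * v j| ≤ η * μ :=
  residual_perturbation_bound_general x s hx hs μ hμ η β rhat v hv1 hv2 hr
end

section
/- Let A ∈ ℝ^{m×n}, b ∈ ℝ^m, c ∈ ℝ^n, let x, s ∈ ℝ^n have strictly positive entries, y ∈ ℝ^m, and set μ := xᵀs/n. Let β₁ ∈ ℝ and η ≥ 0, and suppose (Δx, Δy, Δs) and v ∈ ℝⁿ satisfy A Δx = b − A x, Aᵀ Δy + Δs = c − Aᵀ y − s, X Δs + S Δx = β₁ μ e − X S e − S v, and ‖S v‖_∞ ≤ η μ. Then for every α ∈ [0,1], writing x(α) := x + α Δx, y(α) := y + α Δy, s(α) := s + α Δs: (a) b − A x(α) = (1−α)(b − A x);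 (b) c − Aᵀ y(α) − s(α) = (1−α)(c − Aᵀ y − s); (c) x(α)ᵀ s(α) ≥ (1 + α(β₁ − η − 1)) n μ + α² Δxᵀ Δs; and (d) for each index i, x_i(α) s_i(α) ≥ (1−α) x_i s_i + α (β₁ − η) μ + α² Δx_i Δs_i. -/
open Matrix

/-- basic properties of one inexact-infeasible interior point
iteration: the primal and dual residuals shrink linearly in the step length
`α`, and the complementarity products admit the stated lower bounds. -/
theorem iipm_iteration_properties
    {m n : ℕ}
    (A : Matrix (Fin m) (Fin n) ℝ) (b : Fin m → ℝ) (c : Fin n → ℝ)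
    (x s : Fin n → ℝ) (hx : ∀ i, 0 < x i) (hs : ∀ i, 0 < s i)
    (y : Fin m → ℝ)
    (μ : ℝ) (hμ : μ = (∑ i, x i * s i) / (n : ℝ))
    (β₁ η : ℝ) (hη : 0 ≤ η)
    (Δx Δs : Fin n → ℝ) (Δy : Fin m → ℝ) (v : Fin n → ℝ)
    (h1 : A.mulVec Δx = b - A.mulVec x)
    (h2 : Aᵀ.mulVec Δy + Δs = c - Aᵀ.mulVec y - s)
    (h3 : ∀ i, x i * Δs i + s i * Δx i = β₁ * μ - x i * s i - s i * v i)
    (h4 : ∀ i, |s i * v i| ≤ η * μ) :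
    ∀ α : ℝ, α ∈ Set.Icc (0 : ℝ) 1 →
      (b - A.mulVec (x + α • Δx) = (1 - α) • (b - A.mulVec x)) ∧
      (c - Aᵀ.mulVec (y + α • Δy) - (s + α • Δs)
          = (1 - α) • (c - Aᵀ.mulVec y - s)) ∧
      ((1 + α * (β₁ - η - 1)) * ((n : ℝ) * μ) + α ^ 2 * ∑ i, Δx i * Δs i
          ≤ ∑ i, (x i + α * Δx i) * (s i + α * Δs i)) ∧
      (∀ i, (1 - α) * (x i * s i) + α * (β₁ - η) * μ + α ^ 2 * (Δx i * Δs i)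
          ≤ (x i + α * Δx i) * (s i + α * Δs i)) := by
  intro α hα
  obtain ⟨hα0, hα1⟩ := hα
  have hsum : (n : ℝ) * μ = ∑ i, x i * s i := by
    rcases Nat.eq_zero_or_pos n with h | h
    · subst h; simp
    · rw [hμ, mul_div_cancel₀]
      exact Nat.cast_ne_zero.mpr h.ne'
  have hd : ∀ i, (1 - α) * (x i * s i) + α * (β₁ - η) * μ + α ^ 2 * (Δx i * Δs i)
      ≤ (x i + α * Δx i) * (s i + α * Δs i) := by
    intro i
    have h4' := abs_le.mp (h4 i)
    nlinarith [h3 i, h4'.2, mul_nonneg hα0 (sub_nonneg.mpr h4'.2)]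
  refine ⟨?_, ?_, ?_, hd⟩
  · rw [Matrix.mulVec_add, Matrix.mulVec_smul, h1]
    ext i
    simp only [Pi.sub_apply, Pi.add_apply, Pi.smul_apply, smul_eq_mul]
    ring
  · have h2' : Δs = c - Aᵀ.mulVec y - s - Aᵀ.mulVec Δy := by
      rw [← h2]; abel
    rw [Matrix.mulVec_add, Matrix.mulVec_smul, h2']
    ext i
    simp only [Pi.sub_apply, Pi.add_apply, Pi.smul_apply, smul_eq_mul]
    ring
  · calc (1 + α * (β₁ - η - 1)) * ((n : ℝ) * μ) + α ^ 2 * ∑ i, Δx i * Δs i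
        = ∑ i, ((1 - α) * (x i * s i) + α * (β₁ - η) * μ + α ^ 2 * (Δx i * Δs i)) := by
          rw [Finset.sum_add_distrib, Finset.sum_add_distrib, ← Finset.mul_sum,
            ← Finset.mul_sum, ← hsum]
          simp only [Finset.sum_const, Finset.card_univ, Fintype.card_fin, nsmul_eq_mul]
          rw [Finset.mul_sum]
          ring_nf
      _ ≤ ∑ i, (x i + α * Δx i) * (s i + α * Δs i) :=
          Finset.sum_le_sum fun i _ => hd i
end

section
/- Let A ∈ ℝ^{m×n}, b ∈ ℝ^m, c ∈ ℝ^n, ω > 0, θ ∈ [0,1], and set x⁰ := ω e, s⁰ := ω e, with y⁰ ∈ ℝ^m arbitrary. Let (x*, y*, s*) satisfy A x* = b, Aᵀ y* + s* = c, (x*)ᵀ s* = 0, and 0 ≤ x* ≤ ω e, 0 ≤ s* ≤ ω e componentwise. Let (x, y, s) with x ≥ 0, s ≥ 0 satisfy b − A x = θ (b − A x⁰) and c − Aᵀ y − s = θ (c − Aᵀ y⁰ − s⁰). Then θ ω (eᵀ x + eᵀ s) ≤ θ² n ω² + 2 θ (1−θ) n ω² + xᵀ s; that is, θ ω ‖(x,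 s)‖₁ ≤ (2θ − θ²) n ω² + xᵀ s. -/
open Matrix

/-- Step 1 of the lemma bounding the complementarity terms.
With starting point `(x⁰, s⁰) = (ωe, ωe)`, a bounded optimal solution
`(x*, y*, s*)` and an iterate whose residuals are `θ` times the initial ones,
`θ ω ‖(x, s)‖₁ ≤ (2θ − θ²) n ω² + xᵀ s`. -/
theorem complementarity_l1_bound
    {m n : ℕ}
    (A : Matrix (Fin m) (Fin n) ℝ) (b : Fin m → ℝ) (c : Fin n → ℝ)
    (ω : ℝ) (hω : 0 < ω) (θ : ℝ) (hθ : θ ∈ Set.Icc (0 : ℝ) 1)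
    (x0 s0 : Fin n → ℝ) (y0 : Fin m → ℝ)
    (hx0 : x0 = fun _ => ω) (hs0 : s0 = fun _ => ω)
    (xstar sstar : Fin n → ℝ) (ystar : Fin m → ℝ)
    (hPstar : A.mulVec xstar = b)
    (hDstar : Aᵀ.mulVec ystar + sstar = c)
    (hCstar : ∑ i, xstar i * sstar i = 0)
    (hxstar : ∀ i, 0 ≤ xstar i ∧ xstar i ≤ ω)
    (hsstar : ∀ i, 0 ≤ sstar i ∧ sstar i ≤ ω)
    (x s : Fin n → ℝ) (y : Fin m → ℝ)
    (hxpos : ∀ i, 0 ≤ x i) (hspos : ∀ i, 0 ≤ s i)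
    (hP : b - A.mulVec x = θ • (b - A.mulVec x0))
    (hD : c - Aᵀ.mulVec y - s = θ • (c - Aᵀ.mulVec y0 - s0)) :
    θ * ω * ((∑ i, x i) + ∑ i, s i)
      ≤ θ ^ 2 * (n : ℝ) * ω ^ 2 + 2 * θ * (1 - θ) * (n : ℝ) * ω ^ 2
        + ∑ i, x i * s i := by
  obtain ⟨hθ0, hθ1⟩ := hθ
  set xb : Fin n → ℝ := fun i => θ * ω + (1 - θ) * xstar i - x i with hxbdef
  set sb : Fin n → ℝ := fun i => θ * ω + (1 - θ) * sstar i - s i with hsbdef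
  set yb : Fin m → ℝ := fun j => θ * y0 j + (1 - θ) * ystar j - y j with hybdef
  -- A xb = 0
  have hAxb : A.mulVec xb = 0 := by
    funext j
    have h1 := congrFun hP j
    have h2 := congrFun hPstar j
    simp only [hx0, Pi.sub_apply, Pi.smul_apply, smul_eq_mul, Matrix.mulVec, dotProduct]
      at h1 h2 ⊢
    simp only [hxbdef, mul_sub, mul_add, Finset.sum_sub_distrib, Finset.sum_add_distrib,
      Pi.zero_apply]
    have e1 : ∑ i, A j i * (θ * ω) = θ * ω * ∑ i, A j i := by
      rw [Finset.mul_sum]; apply Finset.sum_congr rfl; intro i _; ring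
    have e2 : ∑ i, A j i * ((1 - θ) * xstar i) = (1 - θ) * ∑ i, A j i * xstar i := by
      rw [Finset.mul_sum]; apply Finset.sum_congr rfl; intro i _; ring
    have e3 : ∑ i, A j i * ω = ω * ∑ i, A j i := by
      rw [Finset.mul_sum]; apply Finset.sum_congr rfl; intro i _; ring
    rw [e1, e2]
    rw [e3] at h1
    linear_combination h1 + (1 - θ) * h2
  -- sb = - Aᵀ yb
  have hsbeq : ∀ i, sb i = - Aᵀ.mulVec yb i := by
    intro i
    have h1 := congrFun hD i
    have h2 := congrFun hDstar i
    simp only [hs0, Pi.sub_apply, Pi.add_apply, Pi.smul_apply, smul_eq_mul,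
      Matrix.mulVec, dotProduct, Matrix.transpose_apply] at h1 h2 ⊢
    simp only [hsbdef, hybdef, mul_sub, mul_add, Finset.sum_sub_distrib, Finset.sum_add_distrib]
    have e1 : ∑ j, A j i * (θ * y0 j) = θ * ∑ j, A j i * y0 j := by
      rw [Finset.mul_sum]; apply Finset.sum_congr rfl; intro j _; ring
    have e2 : ∑ j, A j i * ((1 - θ) * ystar j) = (1 - θ) * ∑ j, A j i * ystar j := by
      rw [Finset.mul_sum]; apply Finset.sum_congr rfl; intro j _; ring
    rw [e1, e2]
    linear_combination h1 + (1 - θ) * h2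
  -- orthogonality: ∑ xb i * sb i = 0
  have horth : ∑ i, xb i * sb i = 0 := by
    have : ∑ i, xb i * sb i = -(xb ⬝ᵥ Aᵀ.mulVec yb) := by
      rw [dotProduct]
      rw [← Finset.sum_neg_distrib]
      apply Finset.sum_congr rfl
      intro i _
      rw [hsbeq i]; ring
    rw [this, Matrix.dotProduct_mulVec, Matrix.vecMul_transpose, hAxb]
    simp
  -- expand orthogonality into sums
  have E : ∑ i, (θ * ω + (1 - θ) * xstar i) * s i + ∑ i, (θ * ω + (1 - θ) * sstar i) * x i
      = ∑ i, (θ * ω + (1 - θ) * xstar i) * (θ * ω + (1 - θ) * sstar i) + ∑ i, x i * s i := by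
    have h : ∑ i, xb i * sb i
        = ∑ i, ((θ * ω + (1 - θ) * xstar i) * (θ * ω + (1 - θ) * sstar i)
            - (θ * ω + (1 - θ) * xstar i) * s i - (θ * ω + (1 - θ) * sstar i) * x i
            + x i * s i) := by
      apply Finset.sum_congr rfl
      intro i _
      simp only [hxbdef, hsbdef]
      ring
    rw [horth] at h
    simp only [Finset.sum_add_distrib, Finset.sum_sub_distrib] at h
    linarith [h.symm]
  -- termwise bounds
  have hA : θ * ω * ∑ i, s i ≤ ∑ i, (θ * ω + (1 - θ) * xstar i) * s i := by
    rw [Finset.mul_sum]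
    apply Finset.sum_le_sum
    intro i _
    nlinarith [mul_nonneg (mul_nonneg (by linarith : (0:ℝ) ≤ 1 - θ) (hxstar i).1) (hspos i)]
  have hB : θ * ω * ∑ i, x i ≤ ∑ i, (θ * ω + (1 - θ) * sstar i) * x i := by
    rw [Finset.mul_sum]
    apply Finset.sum_le_sum
    intro i _
    nlinarith [mul_nonneg (mul_nonneg (by linarith : (0:ℝ) ≤ 1 - θ) (hsstar i).1) (hxpos i)]
  have hC : ∑ i, (θ * ω + (1 - θ) * xstar i) * (θ * ω + (1 - θ) * sstar i)
      ≤ θ ^ 2 * (n : ℝ) * ω ^ 2 + 2 * θ * (1 - θ) * (n : ℝ) * ω ^ 2 := by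
    have step : ∑ i, (θ * ω + (1 - θ) * xstar i) * (θ * ω + (1 - θ) * sstar i)
        ≤ ∑ i : Fin n, (θ ^ 2 * ω ^ 2 + 2 * θ * (1 - θ) * ω ^ 2
            + (1 - θ) ^ 2 * (xstar i * sstar i)) := by
      apply Finset.sum_le_sum
      intro i _
      nlinarith [mul_nonneg (mul_nonneg (mul_nonneg hθ0 (by linarith : (0:ℝ) ≤ 1 - θ)) hω.le)
          (by linarith [(hxstar i).2] : (0:ℝ) ≤ ω - xstar i),
        mul_nonneg (mul_nonneg (mul_nonneg hθ0 (by linarith : (0:ℝ) ≤ 1 - θ)) hω.le)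
          (by linarith [(hsstar i).2] : (0:ℝ) ≤ ω - sstar i)]
    calc ∑ i, (θ * ω + (1 - θ) * xstar i) * (θ * ω + (1 - θ) * sstar i)
        ≤ ∑ i : Fin n, (θ ^ 2 * ω ^ 2 + 2 * θ * (1 - θ) * ω ^ 2
            + (1 - θ) ^ 2 * (xstar i * sstar i)) := step
      _ = (n : ℝ) * (θ ^ 2 * ω ^ 2 + 2 * θ * (1 - θ) * ω ^ 2)
            + (1 - θ) ^ 2 * ∑ i, xstar i * sstar i := by
          rw [Finset.sum_add_distrib, Finset.sum_const, ← Finset.mul_sum]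
          simp [Finset.card_univ]
          ring
      _ = θ ^ 2 * (n : ℝ) * ω ^ 2 + 2 * θ * (1 - θ) * (n : ℝ) * ω ^ 2 := by
          rw [hCstar]; ring
  linarith
end

section
/- Let A ∈ ℝ^{m×n}, b ∈ ℝ^m, c ∈ ℝ^n, let x, s ∈ ℝ^n have strictly positive entries, set μ := xᵀs/n, and let θ ≥ 0, β₁ ∈ ℝ, η ≥ 0. Let (x*, y*, s*) satisfy A x* = b and Aᵀ y* + s* = c, let (x⁰, y⁰, s⁰) be arbitrary with R_P⁰ := b − A x⁰ and R_D⁰ := c − Aᵀ y⁰ − s⁰, and suppose (Δx, Δy, Δs) and v ∈ ℝⁿ satisfy A Δx = θ R_P⁰, Aᵀ Δy + Δs = θ R_D⁰, X Δs + S Δx = β₁ μ e − X S e − S v, and ‖S v‖₂ ≤ η μ. Then ‖D⁻¹ Δx‖₂ ≤ (‖X S e − β₁ μ e‖₂ + η μ) / √(min_i x_i s_i) + 2 θ (‖D⁻¹ (x⁰ − x*)‖₂ + ‖D (s⁰ − s*)‖₂), and the same upper bound holds for ‖D Δs‖₂. -/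
/-!
Write `D = X^{1/2} S^{-1/2}`. The vector `p = Δx + θ (x⁰ - x*)` lies in the null space of `A`, and
`q = Δs + θ (s⁰ - s*) = Aᵀ (θ (y* - y⁰) - Δy)` lies in its row space, so `D⁻¹ p ⊥ D q`. By
Pythagoras both are bounded by `‖D⁻¹ p + D q‖`, and the Newton equation identifies
`D⁻¹ Δx + D Δs` with `-(X S e - β₁ μ e + S v) / √(x s)`, whose norm is at most
`(‖X S e - β₁ μ e‖ + η μ) / √(min_i x_i s_i)`. The triangle inequality accounts for the
`θ`-shifts, each of which is paid for twice.
-/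

open Matrix WithLp RealInnerProductSpace

lemma sqrt_sum_sq_eq_norm_toLp {ι : Type*} [Fintype ι] (f : ι → ℝ) :
    √(∑ i, f i ^ 2) = ‖toLp 2 f‖ := by
  simp [EuclideanSpace.norm_eq, sq_abs]

section Orthogonal

variable {E : Type*} [NormedAddCommGroup E] [InnerProductSpace ℝ E]

lemma norm_le_norm_add_of_inner_eq_zero {u w : E} (h : ⟪u, w⟫ = 0) : ‖u‖ ≤ ‖u + w‖ := by
  have := norm_add_sq_eq_norm_sq_add_norm_sq_real h
  exact le_of_sq_le_sq (by nlinarith [sq_nonneg ‖w‖]) (norm_nonneg _)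

lemma norm_le_of_inner_add_smul_eq_zero {a b q₁ q₂ : E} {θ : ℝ} (hθ : 0 ≤ θ)
    (h : ⟪a + θ • q₁, b + θ • q₂⟫ = 0) :
    ‖a‖ ≤ ‖a + b‖ + 2 * θ * (‖q₁‖ + ‖q₂‖) := by
  have hq₁ : ‖θ • q₁‖ = θ * ‖q₁‖ := by rw [norm_smul, Real.norm_of_nonneg hθ]
  have hq₂ : ‖θ • q₂‖ = θ * ‖q₂‖ := by rw [norm_smul, Real.norm_of_nonneg hθ]
  calc ‖a‖ = ‖(a + θ • q₁) - θ • q₁‖ := by rw [add_sub_cancel_right]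
    _ ≤ ‖a + θ • q₁‖ + θ * ‖q₁‖ := hq₁ ▸ norm_sub_le _ _
    _ ≤ ‖(a + θ • q₁) + (b + θ • q₂)‖ + θ * ‖q₁‖ := by
        gcongr
        exact norm_le_norm_add_of_inner_eq_zero h
    _ ≤ ‖a + b‖ + θ * ‖q₁‖ + θ * ‖q₂‖ + θ * ‖q₁‖ := by
        rw [add_add_add_comm, ← add_assoc, ← hq₁, ← hq₂]
        gcongr
        exact norm_add₃_le
    _ ≤ ‖a + b‖ + 2 * θ * (‖q₁‖ + ‖q₂‖) := by nlinarith [norm_nonneg q₂]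

lemma norm_le_and_norm_le_of_inner_add_smul_eq_zero {a b q₁ q₂ : E} {θ : ℝ} (hθ : 0 ≤ θ)
    (h : ⟪a + θ • q₁, b + θ • q₂⟫ = 0) :
    ‖a‖ ≤ ‖a + b‖ + 2 * θ * (‖q₁‖ + ‖q₂‖) ∧ ‖b‖ ≤ ‖a + b‖ + 2 * θ * (‖q₁‖ + ‖q₂‖) := by
  refine ⟨norm_le_of_inner_add_smul_eq_zero hθ h, ?_⟩
  rw [real_inner_comm] at h
  simpa only [add_comm a b, add_comm ‖q₁‖] using norm_le_of_inner_add_smul_eq_zero hθ h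

end Orthogonal

lemma dotProduct_transpose_mulVec_eq_zero {R m n : Type*} [CommSemiring R] [Fintype m]
    [Fintype n] {A : Matrix m n R} {p : n → R} (hp : A *ᵥ p = 0) (y : m → R) :
    p ⬝ᵥ (Aᵀ *ᵥ y) = 0 := by
  rw [dotProduct_mulVec, vecMul_transpose, hp, zero_dotProduct]

lemma dotProduct_mul_mul_eq_of_mul_eq_one {R n : Type*} [CommRing R] [Fintype n]
    {d e : n → R} (hde : ∀ i, d i * e i = 1) (p q : n → R) :
    (fun i => d i * p i) ⬝ᵥ (fun i => e i * q i) = p ⬝ᵥ q := by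
  refine Finset.sum_congr rfl fun i _ => ?_
  linear_combination (p i * q i) * hde i

lemma sqrt_div_mul_sqrt_div {a b : ℝ} (ha : 0 < a) (hb : 0 < b) : √(a / b) * √(b / a) = 1 := by
  rw [← Real.sqrt_mul (by positivity), div_mul_div_comm, mul_comm a b, div_self (by positivity),
    Real.sqrt_one]

lemma sqrt_div_mul_add_sqrt_div_mul {x s : ℝ} (hx : 0 < x) (hs : 0 < s) (a b : ℝ) :
    √(s / x) * a + √(x / s) * b = (s * a + x * b) / √(x * s) := by
  rw [Real.sqrt_div' _ hx.le, Real.sqrt_div' _ hs.le, Real.sqrt_mul hx.le]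
  have hx' := Real.sq_sqrt hx.le
  have hs' := Real.sq_sqrt hs.le
  have : 0 < √x := Real.sqrt_pos.2 hx
  have : 0 < √s := Real.sqrt_pos.2 hs
  field_simp
  linear_combination a * hs' + b * hx'

lemma inner_toLp_mul_toLp_mul_transpose_mulVec_eq_zero {m n : Type*} [Fintype m] [Fintype n]
    {A : Matrix m n ℝ} {d e : n → ℝ} (hde : ∀ i, d i * e i = 1) {p : n → ℝ}
    (hp : A *ᵥ p = 0) (y : m → ℝ) :
    ⟪toLp 2 (fun i => d i * p i), toLp 2 (fun i => e i * (Aᵀ *ᵥ y) i)⟫ = 0 := by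
  rw [EuclideanSpace.inner_toLp_toLp, star_trivial, dotProduct_comm,
    dotProduct_mul_mul_eq_of_mul_eq_one hde, dotProduct_transpose_mulVec_eq_zero hp]

lemma norm_toLp_div_sqrt_le {ι : Type*} [Fintype ι] (H : (Finset.univ : Finset ι).Nonempty)
    {w : ι → ℝ} (hw : ∀ i, 0 < w i) (f : ι → ℝ) :
    ‖toLp 2 (fun i => f i / √(w i))‖ ≤ ‖toLp 2 f‖ / √(Finset.univ.inf' H w) := by
  have hmin : 0 < Finset.univ.inf' H w := (Finset.lt_inf'_iff H).2 fun i _ => hw i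
  rw [← sqrt_sum_sq_eq_norm_toLp, ← sqrt_sum_sq_eq_norm_toLp,
    ← Real.sqrt_div (Finset.sum_nonneg fun i _ => sq_nonneg _), Finset.sum_div]
  refine Real.sqrt_le_sqrt (Finset.sum_le_sum fun i _ => ?_)
  rw [div_pow, Real.sq_sqrt (hw i).le]
  exact div_le_div_of_nonneg_left (sq_nonneg _) hmin (Finset.inf'_le _ (Finset.mem_univ i))

lemma norm_toLp_add_div_sqrt_le {ι : Type*} [Fintype ι] (H : (Finset.univ : Finset ι).Nonempty)
    {w : ι → ℝ} (hw : ∀ i, 0 < w i) (f g : ι → ℝ) :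
    ‖toLp 2 (fun i => (f i + g i) / √(w i))‖
      ≤ (‖toLp 2 f‖ + ‖toLp 2 g‖) / √(Finset.univ.inf' H w) := by
  refine (norm_toLp_div_sqrt_le H hw (f + g)).trans ?_
  gcongr
  exact norm_add_le (toLp 2 f) (toLp 2 g)

lemma mulVec_add_smul_sub_eq_zero {m n : Type*} [Fintype n] {A : Matrix m n ℝ} {θ : ℝ}
    {b : m → ℝ} {x₀ xstar Δx : n → ℝ}
    (hstar : A *ᵥ xstar = b) (h : A *ᵥ Δx = θ • (b - A *ᵥ x₀)) :
    A *ᵥ (Δx + θ • (x₀ - xstar)) = 0 := by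
  rw [mulVec_add, mulVec_smul, mulVec_sub, h, hstar]
  module

lemma add_smul_sub_eq_transpose_mulVec {m n : Type*} [Fintype m] {A : Matrix m n ℝ} {θ : ℝ}
    {c s₀ sstar Δs : n → ℝ} {y₀ ystar Δy : m → ℝ}
    (hstar : Aᵀ *ᵥ ystar + sstar = c) (h : Aᵀ *ᵥ Δy + Δs = θ • (c - Aᵀ *ᵥ y₀ - s₀)) :
    Δs + θ • (s₀ - sstar) = Aᵀ *ᵥ (θ • (ystar - y₀) - Δy) := by
  rw [← hstar] at h
  rw [mulVec_sub, mulVec_smul, mulVec_sub, eq_sub_of_add_eq' h]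
  module

theorem scaled_direction_bound_general
    {m n : ℕ} (hn : 0 < n)
    (A : Matrix (Fin m) (Fin n) ℝ) (b : Fin m → ℝ) (c : Fin n → ℝ)
    (x s : Fin n → ℝ) (hx : ∀ i, 0 < x i) (hs : ∀ i, 0 < s i)
    (μ : ℝ)
    (θ β₁ η : ℝ) (hθ : 0 ≤ θ)
    (xstar sstar : Fin n → ℝ) (ystar : Fin m → ℝ)
    (hPstar : A.mulVec xstar = b)
    (hDstar : Aᵀ.mulVec ystar + sstar = c)
    (x0 s0 : Fin n → ℝ) (y0 : Fin m → ℝ)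
    (RP0 : Fin m → ℝ) (RD0 : Fin n → ℝ)
    (hRP0 : RP0 = b - A.mulVec x0)
    (hRD0 : RD0 = c - Aᵀ.mulVec y0 - s0)
    (Δx Δs : Fin n → ℝ) (Δy : Fin m → ℝ) (v : Fin n → ℝ)
    (h1 : A.mulVec Δx = θ • RP0)
    (h2 : Aᵀ.mulVec Δy + Δs = θ • RD0)
    (h3 : ∀ i, x i * Δs i + s i * Δx i = β₁ * μ - x i * s i - s i * v i)
    (h4 : Real.sqrt (∑ i, (s i * v i) ^ 2) ≤ η * μ) :
    Real.sqrt (∑ i, (Real.sqrt (s i / x i) * Δx i) ^ 2)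
      ≤ (Real.sqrt (∑ i, (x i * s i - β₁ * μ) ^ 2) + η * μ)
          / Real.sqrt (Finset.univ.inf' (Finset.univ_nonempty_iff.mpr
              ⟨⟨0, hn⟩⟩) fun i => x i * s i)
        + 2 * θ * (Real.sqrt (∑ i, (Real.sqrt (s i / x i) * (x0 i - xstar i)) ^ 2)
            + Real.sqrt (∑ i, (Real.sqrt (x i / s i) * (s0 i - sstar i)) ^ 2)) ∧
    Real.sqrt (∑ i, (Real.sqrt (x i / s i) * Δs i) ^ 2)
      ≤ (Real.sqrt (∑ i, (x i * s i - β₁ * μ) ^ 2) + η * μ)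
          / Real.sqrt (Finset.univ.inf' (Finset.univ_nonempty_iff.mpr
              ⟨⟨0, hn⟩⟩) fun i => x i * s i)
        + 2 * θ * (Real.sqrt (∑ i, (Real.sqrt (s i / x i) * (x0 i - xstar i)) ^ 2)
            + Real.sqrt (∑ i, (Real.sqrt (x i / s i) * (s0 i - sstar i)) ^ 2)) := by
  subst hRP0 hRD0
  simp only [sqrt_sum_sq_eq_norm_toLp] at h4 ⊢
  have horth := inner_toLp_mul_toLp_mul_transpose_mulVec_eq_zero
    (fun i => sqrt_div_mul_sqrt_div (hs i) (hx i))
    (mulVec_add_smul_sub_eq_zero hPstar h1) (θ • (ystar - y0) - Δy)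
  rw [← add_smul_sub_eq_transpose_mulVec hDstar h2] at horth
  obtain ⟨hΔx, hΔs⟩ := norm_le_and_norm_le_of_inner_add_smul_eq_zero hθ
    (a := toLp 2 fun i => √(s i / x i) * Δx i) (b := toLp 2 fun i => √(x i / s i) * Δs i)
    (q₁ := toLp 2 fun i => √(s i / x i) * (x0 i - xstar i))
    (q₂ := toLp 2 fun i => √(x i / s i) * (s0 i - sstar i))
    (by convert horth using 2 <;> ext i <;> simp <;> ring)
  have hsum : (toLp 2 fun i => √(s i / x i) * Δx i) + toLp 2 (fun i => √(x i / s i) * Δs i)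
      = -toLp 2 fun i => (x i * s i - β₁ * μ + s i * v i) / √(x i * s i) := by
    ext i
    simp only [PiLp.add_apply, PiLp.neg_apply]
    rw [sqrt_div_mul_add_sqrt_div_mul (hx i) (hs i), ← neg_div]
    congr 1
    linear_combination h3 i
  rw [hsum, norm_neg] at hΔx hΔs
  have hres := (norm_toLp_add_div_sqrt_le (Finset.univ_nonempty_iff.mpr ⟨⟨0, hn⟩⟩)
    (fun i => mul_pos (hx i) (hs i)) (fun i => x i * s i - β₁ * μ) fun i => s i * v i).trans
      (div_le_div_of_nonneg_right (add_le_add_right h4 _) (Real.sqrt_nonneg _))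
  constructor <;> linarith

/-- Step 2 of the lemma bounding the complementarity terms: the
scaled Newton directions `D⁻¹Δx` and `DΔs` are bounded in terms of the
centrality quantities and the distance from the starting point to a
primal–dual optimal solution. Here `D = X^{1/2}S^{-1/2}`, so
`(D⁻¹u)_i = √(s_i/x_i) u_i` and `(Dw)_i = √(x_i/s_i) w_i`. -/
theorem scaled_direction_bound
    {m n : ℕ} (hn : 0 < n)
    (A : Matrix (Fin m) (Fin n) ℝ) (b : Fin m → ℝ) (c : Fin n → ℝ)
    (x s : Fin n → ℝ) (hx : ∀ i, 0 < x i) (hs : ∀ i, 0 < s i)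
    (μ : ℝ) (hμ : μ = (∑ i, x i * s i) / (n : ℝ))
    (θ β₁ η : ℝ) (hθ : 0 ≤ θ) (hη : 0 ≤ η)
    (xstar sstar : Fin n → ℝ) (ystar : Fin m → ℝ)
    (hPstar : A.mulVec xstar = b)
    (hDstar : Aᵀ.mulVec ystar + sstar = c)
    (x0 s0 : Fin n → ℝ) (y0 : Fin m → ℝ)
    (RP0 : Fin m → ℝ) (RD0 : Fin n → ℝ)
    (hRP0 : RP0 = b - A.mulVec x0)
    (hRD0 : RD0 = c - Aᵀ.mulVec y0 - s0)
    (Δx Δs : Fin n → ℝ) (Δy : Fin m → ℝ) (v : Fin n → ℝ)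
    (h1 : A.mulVec Δx = θ • RP0)
    (h2 : Aᵀ.mulVec Δy + Δs = θ • RD0)
    (h3 : ∀ i, x i * Δs i + s i * Δx i = β₁ * μ - x i * s i - s i * v i)
    (h4 : Real.sqrt (∑ i, (s i * v i) ^ 2) ≤ η * μ) :
    Real.sqrt (∑ i, (Real.sqrt (s i / x i) * Δx i) ^ 2)
      ≤ (Real.sqrt (∑ i, (x i * s i - β₁ * μ) ^ 2) + η * μ)
          / Real.sqrt (Finset.univ.inf' (Finset.univ_nonempty_iff.mpr
              ⟨⟨0, hn⟩⟩) fun i => x i * s i)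
        + 2 * θ * (Real.sqrt (∑ i, (Real.sqrt (s i / x i) * (x0 i - xstar i)) ^ 2)
            + Real.sqrt (∑ i, (Real.sqrt (x i / s i) * (s0 i - sstar i)) ^ 2)) ∧
    Real.sqrt (∑ i, (Real.sqrt (x i / s i) * Δs i) ^ 2)
      ≤ (Real.sqrt (∑ i, (x i * s i - β₁ * μ) ^ 2) + η * μ)
          / Real.sqrt (Finset.univ.inf' (Finset.univ_nonempty_iff.mpr
              ⟨⟨0, hn⟩⟩) fun i => x i * s i)
        + 2 * θ * (Real.sqrt (∑ i, (Real.sqrt (s i / x i) * (x0 i - xstar i)) ^ 2)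
            + Real.sqrt (∑ i, (Real.sqrt (x i / s i) * (s0 i - sstar i)) ^ 2)) :=
  scaled_direction_bound_general hn A b c x s hx hs μ θ β₁ η hθ xstar sstar ystar hPstar hDstar x0
    s0 y0 RP0 RD0 hRP0 hRD0 Δx Δs Δy v h1 h2 h3 h4
end

section
/- Let n ≥ 1, let x, s ∈ ℝ^n have strictly positive entries, set μ := xᵀs/n, and let 0 ≤ β₁ ≤ 1. Then ‖X S e − β₁ μ e‖₂ ≤ n μ. If moreover γ₁ ∈ (0,1], μ > 0, x_i s_i ≥ γ₁ μ for all i, η ≥ 0, and v ∈ ℝⁿ satisfies ‖S v‖₂ ≤ η μ, then ‖(X S)^{−1/2} (β₁ μ e − X S e − S v)‖₂ ≤ (n + η) √μ / √γ₁. -/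
lemma sqrt_sum_sq_add_le {n : ℕ} (u v : Fin n → ℝ) :
    Real.sqrt (∑ i, (u i + v i) ^ 2)
      ≤ Real.sqrt (∑ i, (u i) ^ 2) + Real.sqrt (∑ i, (v i) ^ 2) := by
  have h := norm_add_le ((EuclideanSpace.equiv (Fin n) ℝ).symm u)
    ((EuclideanSpace.equiv (Fin n) ℝ).symm v)
  simpa [EuclideanSpace.norm_eq, Real.norm_eq_abs, sq_abs] using h

/-- `‖XSe − β₁μe‖₂ ≤ nμ` when `0 ≤ β₁ ≤ 1`, and, under the
centrality condition `x_i s_i ≥ γ₁ μ` and `‖Sv‖₂ ≤ ημ`, the scaled right-hand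
side of the complementarity equation satisfies
`‖(XS)^{−1/2}(β₁μe − XSe − Sv)‖₂ ≤ (n + η)√μ/√γ₁`. -/
theorem centrality_norm_bounds
    {n : ℕ} (hn : 1 ≤ n)
    (x s : Fin n → ℝ) (hx : ∀ i, 0 < x i) (hs : ∀ i, 0 < s i)
    (μ : ℝ) (hμ : μ = (∑ i, x i * s i) / (n : ℝ))
    (β₁ : ℝ) (hβ₁ : 0 ≤ β₁) (hβ₁' : β₁ ≤ 1) :
    Real.sqrt (∑ i, (x i * s i - β₁ * μ) ^ 2) ≤ (n : ℝ) * μ ∧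
    ∀ (γ₁ η : ℝ) (v : Fin n → ℝ),
      0 < γ₁ → γ₁ ≤ 1 → 0 < μ →
      (∀ i, γ₁ * μ ≤ x i * s i) → 0 ≤ η →
      Real.sqrt (∑ i, (s i * v i) ^ 2) ≤ η * μ →
      Real.sqrt (∑ i,
          ((β₁ * μ - x i * s i - s i * v i) / Real.sqrt (x i * s i)) ^ 2)
        ≤ ((n : ℝ) + η) * Real.sqrt μ / Real.sqrt γ₁ := by
  have hn0 : (0 : ℝ) < (n : ℝ) := by exact_mod_cast hn
  have ha : ∀ i, 0 < x i * s i := fun i => mul_pos (hx i) (hs i)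
  have hμ0 : 0 ≤ μ := by
    rw [hμ]
    apply div_nonneg _ hn0.le
    exact Finset.sum_nonneg fun i _ => (ha i).le
  have hsum : ∑ i, x i * s i = (n : ℝ) * μ := by
    rw [hμ]; field_simp
  have hsq : ∑ i, (x i * s i) ^ 2 ≤ ((n : ℝ) * μ) ^ 2 := by
    rw [← hsum]
    exact Finset.sum_sq_le_sq_sum_of_nonneg fun i _ => (ha i).le
  have hexp : ∑ i, (x i * s i - β₁ * μ) ^ 2
      = ∑ i, (x i * s i) ^ 2 - 2 * (β₁ * μ) * (∑ i, x i * s i)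
        + (n : ℝ) * (β₁ * μ) ^ 2 := by
    rw [Finset.mul_sum]
    rw [show ((n : ℝ) * (β₁ * μ) ^ 2) = ∑ _i : Fin n, (β₁ * μ) ^ 2 by
      simp [Finset.sum_const, mul_comm]]
    rw [← Finset.sum_sub_distrib, ← Finset.sum_add_distrib]
    apply Finset.sum_congr rfl
    intro i _
    ring
  have part1sq : ∑ i, (x i * s i - β₁ * μ) ^ 2 ≤ ((n : ℝ) * μ) ^ 2 := by
    rw [hexp, hsum]
    nlinarith [sq_nonneg μ, mul_nonneg hβ₁ hμ0, sq_nonneg (β₁ * μ),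
      mul_nonneg (mul_nonneg hβ₁ (sub_nonneg.2 hβ₁')) (sq_nonneg μ)]
  have part1 : Real.sqrt (∑ i, (x i * s i - β₁ * μ) ^ 2) ≤ (n : ℝ) * μ := by
    have := Real.sqrt_le_sqrt part1sq
    rwa [Real.sqrt_sq (by positivity)] at this
  refine ⟨part1, ?_⟩
  intro γ₁ η v hγ hγ1 hμpos hcent hη hSv
  set w : Fin n → ℝ := fun i => β₁ * μ - x i * s i - s i * v i with hw
  have hγμ : 0 < γ₁ * μ := mul_pos hγ hμpos
  -- rewrite each term and bound by w_i^2 / (γ₁ μ)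
  have hterm : ∀ i, ((β₁ * μ - x i * s i - s i * v i) / Real.sqrt (x i * s i)) ^ 2
      = (w i) ^ 2 / (x i * s i) := by
    intro i
    rw [div_pow, Real.sq_sqrt (ha i).le]
  have hbound : ∑ i, ((β₁ * μ - x i * s i - s i * v i) / Real.sqrt (x i * s i)) ^ 2
      ≤ (∑ i, (w i) ^ 2) / (γ₁ * μ) := by
    rw [Finset.sum_div]
    apply Finset.sum_le_sum
    intro i _
    rw [hterm i]
    exact div_le_div_of_nonneg_left (sq_nonneg _) hγμ (hcent i)
  -- triangle inequality for √∑ w²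
  have htri : Real.sqrt (∑ i, (w i) ^ 2) ≤ (n : ℝ) * μ + η * μ := by
    have h2 : Real.sqrt (∑ i, (-(s i * v i)) ^ 2) ≤ η * μ := by
      simpa using hSv
    have h1 : Real.sqrt (∑ i, (β₁ * μ - x i * s i) ^ 2) ≤ (n : ℝ) * μ := by
      have : ∀ i, (β₁ * μ - x i * s i) ^ 2 = (x i * s i - β₁ * μ) ^ 2 := by
        intro i; ring
      simpa [this] using part1
    have h := sqrt_sum_sq_add_le (fun i => β₁ * μ - x i * s i)
      (fun i => -(s i * v i))
    have hwe : ∀ i, w i = (β₁ * μ - x i * s i) + (-(s i * v i)) := by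
      intro i; simp [hw]; ring
    calc Real.sqrt (∑ i, (w i) ^ 2)
        = Real.sqrt (∑ i, ((β₁ * μ - x i * s i) + (-(s i * v i))) ^ 2) := by
          simp_rw [hwe]
      _ ≤ _ := h
      _ ≤ (n : ℝ) * μ + η * μ := add_le_add h1 h2
  have hfinal : Real.sqrt ((∑ i, (w i) ^ 2) / (γ₁ * μ))
      ≤ ((n : ℝ) + η) * Real.sqrt μ / Real.sqrt γ₁ := by
    have hW0 : 0 ≤ ∑ i, (w i) ^ 2 := Finset.sum_nonneg fun i _ => sq_nonneg _
    have hsμ : (0:ℝ) < Real.sqrt μ := Real.sqrt_pos.2 hμpos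
    have hsγ : (0:ℝ) < Real.sqrt γ₁ := Real.sqrt_pos.2 hγ
    have hμsq : Real.sqrt μ * Real.sqrt μ = μ := Real.mul_self_sqrt hμ0
    rw [Real.sqrt_div hW0, Real.sqrt_mul hγ.le]
    have heq : ((n : ℝ) * μ + η * μ) / (Real.sqrt γ₁ * Real.sqrt μ)
        = ((n : ℝ) + η) * Real.sqrt μ / Real.sqrt γ₁ := by
      have hnum : (n : ℝ) * μ + η * μ
          = ((n : ℝ) + η) * Real.sqrt μ * Real.sqrt μ := by
        conv_lhs => rw [← hμsq]
        ring
      rw [hnum]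
      field_simp
    rw [← heq]
    apply div_le_div_of_nonneg_right htri (by positivity) |>.trans_eq rfl
  calc Real.sqrt (∑ i, ((β₁ * μ - x i * s i - s i * v i) / Real.sqrt (x i * s i)) ^ 2)
      ≤ Real.sqrt ((∑ i, (w i) ^ 2) / (γ₁ * μ)) := Real.sqrt_le_sqrt hbound
    _ ≤ _ := hfinal
end

section
/- Let n ≥ 1, let x, s ∈ ℝ^n have strictly positive entries, set μ := xᵀs/n > 0, and let constants satisfy 0 < γ₁ < 1, 0 < η < β₁ < β₂ < 1, β₁ + η < β₂, and (β₁ − η) > γ₁(β₁ + η). Suppose x_i s_i ≥ γ₁ μ for all i, and suppose Δx, Δs ∈ ℝⁿ and v ∈ ℝⁿ satisfy X Δs + S Δx = β₁ μ e − X S e − S v with ‖S v‖_∞ ≤ η μ. Let ν > 0 satisfy |Δxᵀ Δs| ≤ ν and |Δx_i Δs_i − (γ₁/n) Δxᵀ Δs| ≤ ν for all i. Define δ₁ := ((β₁ − η) − γ₁(β₁ + η))/n, δ₂ := β₁ − η, δ₃ := β₂ − β₁ − η, and α̃ := min{1, min{δ₁, δ₂, δ₃} · xᵀs / ν}. Then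 α̃ > 0 and for every α ∈ [0, α̃], writing x(α) := x + α Δx and s(α) := s + α Δs: (i) x_i(α) s_i(α) ≥ (γ₁/n) · x(α)ᵀ s(α) for all i; (ii) x(α)ᵀ s(α) ≥ (1 − α) xᵀ s; and (iii) x(α)ᵀ s(α) ≤ (1 − α(1 − β₂)) xᵀ s. -/
set_option maxHeartbeats 800000


/-- the step-length lemma of the inexact-infeasible IPM. Every
step length up to `α̃` keeps the iterate in the `γ₁`-centrality condition (i),
does not decrease the complementarity faster than the residuals (ii), and
satisfies the Armijo-type decrease condition (iii). -/
theorem step_length_lemma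
    {n : ℕ} (hn : 1 ≤ n)
    (x s : Fin n → ℝ) (hx : ∀ i, 0 < x i) (hs : ∀ i, 0 < s i)
    (μ : ℝ) (hμ : μ = (∑ i, x i * s i) / (n : ℝ)) (hμpos : 0 < μ)
    (γ₁ β₁ β₂ η : ℝ)
    (hγ₁ : 0 < γ₁) (hγ₁' : γ₁ < 1)
    (hη : 0 < η) (hηβ₁ : η < β₁) (hβ₁β₂ : β₁ < β₂) (hβ₂ : β₂ < 1)
    (hsum : β₁ + η < β₂)
    (hδ₁pos : γ₁ * (β₁ + η) < β₁ - η)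
    (hcent : ∀ i, γ₁ * μ ≤ x i * s i)
    (Δx Δs v : Fin n → ℝ)
    (hNewton : ∀ i, x i * Δs i + s i * Δx i = β₁ * μ - x i * s i - s i * v i)
    (hv : ∀ i, |s i * v i| ≤ η * μ)
    (ν : ℝ) (hν : 0 < ν)
    (hν1 : |∑ i, Δx i * Δs i| ≤ ν)
    (hν2 : ∀ i, |Δx i * Δs i - (γ₁ / (n : ℝ)) * ∑ j, Δx j * Δs j| ≤ ν)
    (δ₁ δ₂ δ₃ αtilde : ℝ)
    (hδ₁ : δ₁ = ((β₁ - η) - γ₁ * (β₁ + η)) / (n : ℝ))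
    (hδ₂ : δ₂ = β₁ - η)
    (hδ₃ : δ₃ = β₂ - β₁ - η)
    (hαtilde : αtilde = min 1 (min δ₁ (min δ₂ δ₃) * (∑ i, x i * s i) / ν)) :
    0 < αtilde ∧
    ∀ α : ℝ, α ∈ Set.Icc (0 : ℝ) αtilde →
      (∀ i, (γ₁ / (n : ℝ)) * ∑ j, (x j + α * Δx j) * (s j + α * Δs j)
          ≤ (x i + α * Δx i) * (s i + α * Δs i)) ∧
      ((1 - α) * ∑ i, x i * s i
          ≤ ∑ i, (x i + α * Δx i) * (s i + α * Δs i)) ∧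
      (∑ i, (x i + α * Δx i) * (s i + α * Δs i)
          ≤ (1 - α * (1 - β₂)) * ∑ i, x i * s i) := by
  have hn0 : (0:ℝ) < (n:ℝ) := by exact_mod_cast Nat.lt_of_lt_of_le Nat.zero_lt_one hn
  have hne : Nonempty (Fin n) := ⟨⟨0, hn⟩⟩
  set T : ℝ := ∑ i, x i * s i with hTdef
  set D : ℝ := ∑ i, Δx i * Δs i with hDdef
  set V : ℝ := ∑ i, s i * v i with hVdef
  have hT : T = (n:ℝ) * μ := by
    rw [hμ]; field_simp
  have hTpos : 0 < T := by
    rw [hT]; positivity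
  have hVabs : |V| ≤ (n:ℝ) * (η * μ) := by
    calc |V| ≤ ∑ i, |s i * v i| := Finset.abs_sum_le_sum_abs _ _
    _ ≤ ∑ _i : Fin n, η * μ := Finset.sum_le_sum (fun i _ => hv i)
    _ = (n:ℝ) * (η * μ) := by
        rw [Finset.sum_const, Finset.card_univ, Fintype.card_fin, nsmul_eq_mul]
  have hVl : -((n:ℝ) * (η * μ)) ≤ V := (abs_le.mp hVabs).1
  have hVu : V ≤ (n:ℝ) * (η * μ) := (abs_le.mp hVabs).2
  have hDl : -ν ≤ D := (abs_le.mp hν1).1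
  have hDu : D ≤ ν := (abs_le.mp hν1).2
  have hδ₁p : 0 < δ₁ := by rw [hδ₁]; exact div_pos (by linarith) hn0
  have hδ₂p : 0 < δ₂ := by rw [hδ₂]; linarith
  have hδ₃p : 0 < δ₃ := by rw [hδ₃]; linarith
  have hminp : 0 < min δ₁ (min δ₂ δ₃) := lt_min hδ₁p (lt_min hδ₂p hδ₃p)
  have hαpos : 0 < αtilde := by
    rw [hαtilde]
    exact lt_min one_pos (div_pos (mul_pos hminp hTpos) hν)
  have hδ₁T : δ₁ * T = ((β₁ - η) - γ₁ * (β₁ + η)) * μ := by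
    rw [hδ₁, hT]; field_simp
  have hδ₂T : δ₂ * T = (β₁ - η) * ((n:ℝ) * μ) := by rw [hδ₂, hT]
  have hδ₃T : δ₃ * T = (β₂ - β₁ - η) * ((n:ℝ) * μ) := by rw [hδ₃, hT]
  refine ⟨hαpos, ?_⟩
  rintro α ⟨hα0, hαle⟩
  have hα1 : α ≤ 1 := hαle.trans (by rw [hαtilde]; exact min_le_left _ _)
  have hαν : α * ν ≤ min δ₁ (min δ₂ δ₃) * T := by
    have h2 : αtilde ≤ min δ₁ (min δ₂ δ₃) * T / ν := by
      rw [hαtilde]; exact min_le_right _ _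
    have h3 : α ≤ min δ₁ (min δ₂ δ₃) * T / ν := hαle.trans h2
    exact (le_div_iff₀ hν).mp h3
  have hαν₁ : α * ν ≤ δ₁ * T :=
    hαν.trans (mul_le_mul_of_nonneg_right (min_le_left _ _) hTpos.le)
  have hαν₂ : α * ν ≤ δ₂ * T :=
    hαν.trans (mul_le_mul_of_nonneg_right ((min_le_right _ _).trans (min_le_left _ _)) hTpos.le)
  have hαν₃ : α * ν ≤ δ₃ * T :=
    hαν.trans (mul_le_mul_of_nonneg_right ((min_le_right _ _).trans (min_le_right _ _)) hTpos.le)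
  have hpt : ∀ i, (x i + α * Δx i) * (s i + α * Δs i)
      = x i * s i + α * (β₁ * μ - x i * s i - s i * v i) + α ^ 2 * (Δx i * Δs i) := by
    intro i
    linear_combination α * hNewton i
  have hSexp : ∑ i, (x i + α * Δx i) * (s i + α * Δs i)
      = (1 - α) * T + α * (β₁ * (n:ℝ) * μ - V) + α ^ 2 * D := by
    calc ∑ i, (x i + α * Δx i) * (s i + α * Δs i)
        = ∑ i, (x i * s i + α * (β₁ * μ - x i * s i - s i * v i) + α ^ 2 * (Δx i * Δs i)) :=
          Finset.sum_congr rfl (fun i _ => hpt i)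
      _ = T + α * ((n:ℝ) * (β₁ * μ) - T - V) + α ^ 2 * D := by
          rw [Finset.sum_add_distrib, Finset.sum_add_distrib, ← Finset.mul_sum,
            ← Finset.mul_sum, Finset.sum_sub_distrib, Finset.sum_sub_distrib,
            Finset.sum_const, Finset.card_univ, Fintype.card_fin, nsmul_eq_mul]
      _ = (1 - α) * T + α * (β₁ * (n:ℝ) * μ - V) + α ^ 2 * D := by ring
  refine ⟨?_, ?_, ?_⟩
  · -- (i) centrality
    intro i
    rw [hSexp, hpt i, hT]
    rw [div_mul_eq_mul_div, div_le_iff₀ hn0]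
    have h1 : 0 ≤ (1 - α) * (x i * s i - γ₁ * μ) :=
      mul_nonneg (by linarith) (by linarith [hcent i])
    have h2 : 0 ≤ α * (η * μ - s i * v i) :=
      mul_nonneg hα0 (by linarith [(abs_le.mp (hv i)).2])
    have h3 : 0 ≤ α * (V + (n:ℝ) * (η * μ)) := mul_nonneg hα0 (by linarith)
    have hν2i := abs_le.mp (hν2 i)
    have h4' : -ν ≤ Δx i * Δs i - γ₁ / (n:ℝ) * D := hν2i.1
    have h4'' : -ν * (n:ℝ) ≤ (Δx i * Δs i - γ₁ / (n:ℝ) * D) * (n:ℝ) :=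
      mul_le_mul_of_nonneg_right h4' hn0.le
    have hfld : (γ₁ / (n:ℝ) * D) * (n:ℝ) = γ₁ * D := by field_simp
    have h4a : γ₁ * D ≤ (Δx i * Δs i) * (n:ℝ) + ν * (n:ℝ) := by
      rw [sub_mul, hfld] at h4''
      linarith only [h4'']
    have h4 : 0 ≤ α ^ 2 * ((n:ℝ) * (Δx i * Δs i) - γ₁ * D + ν * (n:ℝ)) :=
      mul_nonneg (sq_nonneg α) (by linarith only [h4a])
    have h5 : 0 ≤ α * (((β₁ - η) - γ₁ * (β₁ + η)) * μ - α * ν) := by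
      rw [← hδ₁T]
      exact mul_nonneg hα0 (by linarith)
    linarith only [mul_nonneg hn0.le h1, mul_nonneg hn0.le h2, mul_nonneg hγ₁.le h3,
      h4, mul_nonneg hn0.le h5]
  · -- (ii)
    rw [hSexp, hT]
    have ha : 0 ≤ α * ((n:ℝ) * (η * μ) - V) := mul_nonneg hα0 (by linarith)
    have hb : 0 ≤ α ^ 2 * (D + ν) := mul_nonneg (sq_nonneg α) (by linarith only [hDl])
    have hc : 0 ≤ α * ((β₁ - η) * ((n:ℝ) * μ) - α * ν) := by
      rw [← hδ₂T]
      exact mul_nonneg hα0 (by linarith)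
    linarith only [ha, hb, hc]
  · -- (iii)
    rw [hSexp, hT]
    have ha : 0 ≤ α * (V + (n:ℝ) * (η * μ)) := mul_nonneg hα0 (by linarith)
    have hb : 0 ≤ α ^ 2 * (ν - D) := mul_nonneg (sq_nonneg α) (by linarith only [hDu])
    have hc : 0 ≤ α * ((β₂ - β₁ - η) * ((n:ℝ) * μ) - α * ν) := by
      rw [← hδ₃T]
      exact mul_nonneg hα0 (by linarith)
    linarith only [ha, hb, hc]
end

section
/- Let n ≥ 1, ω > 0, γ₁ ∈ (0,1], let x, s ∈ ℝ^n have strictly positive entries with μ := xᵀs/n > 0 and x_i s_i ≥ γ₁ μ for all i, and let x*, s* ∈ ℝⁿ satisfy 0 ≤ x* ≤ ω e and 0 ≤ s* ≤ ω e componentwise. Set x⁰ := ω e and s⁰ := ω e. Then ‖D⁻¹ (x⁰ − x*)‖₂ + ‖D (s⁰ − s*)‖₂ ≤ ω ‖(x, s)‖₁ / √(γ₁ μ). -/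
lemma scaled_dist_aux {n : ℕ} (c : ℝ) (hc : 0 < c)
    (a b : Fin n → ℝ) (ha : ∀ i, 0 < a i) (hb : ∀ i, 0 < b i)
    (hab : ∀ i, c ≤ a i * b i)
    (ω : ℝ) (hω : 0 < ω) (y : Fin n → ℝ) (hy : ∀ i, 0 ≤ y i ∧ y i ≤ ω) :
    Real.sqrt (∑ i, (Real.sqrt (b i / a i) * (ω - y i)) ^ 2)
      ≤ ω * (∑ i, b i) / Real.sqrt c := by
  have hbsum : 0 ≤ ∑ i, b i := Finset.sum_nonneg fun i _ => (hb i).le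
  have hrhs : 0 ≤ ω * (∑ i, b i) / Real.sqrt c := by positivity
  rw [show ω * (∑ i, b i) / Real.sqrt c
      = Real.sqrt ((ω * (∑ i, b i))^2 / c) by
    rw [Real.sqrt_div' _ hc.le, Real.sqrt_sq (by positivity)]]
  apply Real.sqrt_le_sqrt
  have step1 : ∑ i, (Real.sqrt (b i / a i) * (ω - y i)) ^ 2
      ≤ ∑ i, ω ^ 2 * (b i ^ 2) / c := by
    apply Finset.sum_le_sum
    intro i _
    rw [mul_pow, Real.sq_sqrt (div_nonneg (hb i).le (ha i).le)]
    have h1 : (ω - y i) ^ 2 ≤ ω ^ 2 := by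
      apply sq_le_sq'
      · nlinarith [(hy i).1, (hy i).2]
      · nlinarith [(hy i).1]
    have h2 : b i / a i ≤ b i ^ 2 / c := by
      rw [div_le_div_iff₀ (ha i) hc]
      have := hab i
      nlinarith [hb i, ha i]
    calc b i / a i * (ω - y i) ^ 2 ≤ b i ^ 2 / c * ω ^ 2 := by
          apply mul_le_mul h2 h1 (sq_nonneg _) (by positivity)
      _ = ω ^ 2 * b i ^ 2 / c := by ring
  refine step1.trans ?_
  rw [← Finset.sum_div, ← Finset.mul_sum, mul_pow]
  gcongr
  exact Finset.sum_sq_le_sq_sum_of_nonneg fun i _ => (hb i).le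

/-- with starting point `(x⁰, s⁰) = (ωe, ωe)` and a bounded
optimal solution `(x*, s*)`, the scaled distance from the starting point is
controlled: `‖D⁻¹(x⁰ − x*)‖₂ + ‖D(s⁰ − s*)‖₂ ≤ ω‖(x,s)‖₁/√(γ₁μ)`, where
`D = X^{1/2}S^{-1/2}` so `(D⁻¹u)_i = √(s_i/x_i)u_i` and `(Dw)_i = √(x_i/s_i)w_i`. -/
theorem initial_point_scaled_bound
    {n : ℕ} (hn : 1 ≤ n)
    (ω : ℝ) (hω : 0 < ω)
    (γ₁ : ℝ) (hγ₁ : 0 < γ₁) (hγ₁' : γ₁ ≤ 1)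
    (x s : Fin n → ℝ) (hx : ∀ i, 0 < x i) (hs : ∀ i, 0 < s i)
    (μ : ℝ) (hμ : μ = (∑ i, x i * s i) / (n : ℝ)) (hμpos : 0 < μ)
    (hcent : ∀ i, γ₁ * μ ≤ x i * s i)
    (xstar sstar : Fin n → ℝ)
    (hxstar : ∀ i, 0 ≤ xstar i ∧ xstar i ≤ ω)
    (hsstar : ∀ i, 0 ≤ sstar i ∧ sstar i ≤ ω)
    (x0 s0 : Fin n → ℝ) (hx0 : x0 = fun _ => ω) (hs0 : s0 = fun _ => ω) :
    Real.sqrt (∑ i, (Real.sqrt (s i / x i) * (x0 i - xstar i)) ^ 2)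
      + Real.sqrt (∑ i, (Real.sqrt (x i / s i) * (s0 i - sstar i)) ^ 2)
    ≤ ω * ((∑ i, x i) + ∑ i, s i) / Real.sqrt (γ₁ * μ) := by
  subst hx0 hs0
  have hc : 0 < γ₁ * μ := mul_pos hγ₁ hμpos
  have h1 := scaled_dist_aux (γ₁ * μ) hc x s hx hs hcent ω hω xstar hxstar
  have h2 := scaled_dist_aux (γ₁ * μ) hc s x hs hx
    (fun i => (hcent i).trans_eq (mul_comm _ _)) ω hω sstar hsstar
  calc _ ≤ ω * (∑ i, s i) / Real.sqrt (γ₁ * μ)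
          + ω * (∑ i, x i) / Real.sqrt (γ₁ * μ) := add_le_add h1 h2
    _ = ω * ((∑ i, x i) + ∑ i, s i) / Real.sqrt (γ₁ * μ) := by ring
end

section
/- Let A ∈ ℝ^{m×n}, b ∈ ℝ^m, c ∈ ℝ^n, x̃ ∈ ℝ^n, ỹ ∈ ℝ^m, and ∇ ≥ 1. Define b̄ := b − A x̃ and c̄ := c − Aᵀ ỹ. For any x̄ ∈ ℝ^n and ȳ ∈ ℝ^m, set x' := x̃ + (1/∇) x̄ and y' := ỹ + (1/∇) ȳ. Then: (i) b − A x' = (1/∇)(∇ b̄ − A x̄); (ii) c − Aᵀ y' = (1/∇)(∇ c̄ − Aᵀ ȳ); (iii) x' ≥ 0 if and only if x̄ ≥ −∇ x̃; and (iv) (c − Aᵀ y')ᵀ x' = (1/∇²)(∇ c̄ − Aᵀ ȳ)ᵀ (x̄ + ∇ x̃). Consequently, if ζ̂ > 0 and (x̄, ȳ) is ζ̂-optimal for the refining problem min{∇ c̄ᵀ x : A x = ∇ b̄, x ≥ −∇ x̃}, in the sense that ‖∇ b̄ − A x̄‖ ≤ ζ̂, x̄ ≥ −∇ x̃, ∇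 c̄ − Aᵀ ȳ ≥ −ζ̂ e, and (∇ c̄ − Aᵀ ȳ)ᵀ (x̄ + ∇ x̃) ≤ ζ̂, then (x', y') is (ζ̂/∇)-optimal for the original problem min{cᵀ x : A x = b, x ≥ 0}: ‖b − A x'‖ ≤ ζ̂/∇, x' ≥ 0, c − Aᵀ y' ≥ −(ζ̂/∇) e, and (c − Aᵀ y')ᵀ x' ≤ ζ̂/∇. -/
open Matrix

/-- correctness of the iterative refinement step. Writing
`b̄ = b − Ax̃`, `c̄ = c − Aᵀỹ`, `x' = x̃ + (1/∇)x̄`, `y' = ỹ + (1/∇)ȳ`, the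
residuals, sign constraints, and complementarity of `(x', y')` for the
original problem are the `(1/∇)`-scalings of those of `(x̄, ȳ)` for the
refining problem; consequently a `ζ̂`-optimal solution of the refining problem
yields a `(ζ̂/∇)`-optimal solution of the original problem. -/
theorem iterative_refinement_step
    {m n : ℕ}
    (A : Matrix (Fin m) (Fin n) ℝ) (b : Fin m → ℝ) (c : Fin n → ℝ)
    (xt : Fin n → ℝ) (yt : Fin m → ℝ)
    (nab : ℝ) (hnab : 1 ≤ nab)
    (bbar : Fin m → ℝ) (hbbar : bbar = b - A.mulVec xt)
    (cbar : Fin n → ℝ) (hcbar : cbar = c - Aᵀ.mulVec yt)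
    (xbar : Fin n → ℝ) (ybar : Fin m → ℝ)
    (x' : Fin n → ℝ) (hx' : x' = xt + (1 / nab) • xbar)
    (y' : Fin m → ℝ) (hy' : y' = yt + (1 / nab) • ybar) :
    (b - A.mulVec x' = (1 / nab) • (nab • bbar - A.mulVec xbar)) ∧
    (c - Aᵀ.mulVec y' = (1 / nab) • (nab • cbar - Aᵀ.mulVec ybar)) ∧
    ((∀ i, 0 ≤ x' i) ↔ ∀ i, -(nab * xt i) ≤ xbar i) ∧
    (∑ i, (c - Aᵀ.mulVec y') i * x' i
        = (1 / nab ^ 2) *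
          ∑ i, (nab • cbar - Aᵀ.mulVec ybar) i * (xbar i + nab * xt i)) ∧
    (∀ ζhat : ℝ, 0 < ζhat →
      Real.sqrt (∑ j, ((nab • bbar - A.mulVec xbar) j) ^ 2) ≤ ζhat →
      (∀ i, -(nab * xt i) ≤ xbar i) →
      (∀ i, -ζhat ≤ (nab • cbar - Aᵀ.mulVec ybar) i) →
      (∑ i, (nab • cbar - Aᵀ.mulVec ybar) i * (xbar i + nab * xt i)) ≤ ζhat →
      Real.sqrt (∑ j, ((b - A.mulVec x') j) ^ 2) ≤ ζhat / nab ∧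
      (∀ i, 0 ≤ x' i) ∧
      (∀ i, -(ζhat / nab) ≤ (c - Aᵀ.mulVec y') i) ∧
      (∑ i, (c - Aᵀ.mulVec y') i * x' i) ≤ ζhat / nab) := by
  have hpos : (0:ℝ) < nab := lt_of_lt_of_le one_pos hnab
  have hne : nab ≠ 0 := ne_of_gt hpos
  have h1 : b - A.mulVec x' = (1 / nab) • (nab • bbar - A.mulVec xbar) := by
    subst hbbar hx'
    funext j
    simp [Matrix.mulVec_add, Matrix.mulVec_smul, Pi.smul_apply, smul_eq_mul]
    field_simp
    ring
  have h2 : c - Aᵀ.mulVec y' = (1 / nab) • (nab • cbar - Aᵀ.mulVec ybar) := by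
    subst hcbar hy'
    funext j
    simp [Matrix.mulVec_add, Matrix.mulVec_smul, Pi.smul_apply, smul_eq_mul]
    field_simp
    ring
  have hxp : ∀ i, x' i = (1 / nab) * (xbar i + nab * xt i) := by
    intro i
    subst hx'
    simp [Pi.smul_apply, smul_eq_mul]
    field_simp
    ring
  have h3 : (∀ i, 0 ≤ x' i) ↔ ∀ i, -(nab * xt i) ≤ xbar i := by
    constructor
    · intro h i
      have h0 := h i
      rw [hxp i] at h0
      have h1' := mul_nonneg hpos.le h0
      rw [← mul_assoc, mul_one_div, div_self hne, one_mul] at h1'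
      linarith
    · intro h i
      rw [hxp i]
      have h0 : 0 ≤ xbar i + nab * xt i := by linarith [h i]
      positivity
  have h4 : (∑ i, (c - Aᵀ.mulVec y') i * x' i
        = (1 / nab ^ 2) *
          ∑ i, (nab • cbar - Aᵀ.mulVec ybar) i * (xbar i + nab * xt i)) := by
    rw [h2, Finset.mul_sum]
    refine Finset.sum_congr rfl fun i _ => ?_
    rw [hxp i]
    simp [Pi.smul_apply, smul_eq_mul]
    ring
  refine ⟨h1, h2, h3, h4, ?_⟩
  intro ζhat hζ hres hsign hdual hcomp
  have hinv : (0:ℝ) < 1 / nab := by positivity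
  refine ⟨?_, h3.mpr hsign, ?_, ?_⟩
  · rw [h1]
    have : ∑ j, (((1 / nab) • (nab • bbar - A.mulVec xbar)) j) ^ 2
        = (1/nab)^2 * ∑ j, ((nab • bbar - A.mulVec xbar) j) ^ 2 := by
      rw [Finset.mul_sum]
      refine Finset.sum_congr rfl fun j _ => ?_
      simp [Pi.smul_apply, smul_eq_mul]
      ring
    rw [this, Real.sqrt_mul (by positivity), Real.sqrt_sq (le_of_lt hinv)]
    rw [div_eq_mul_inv ζhat, mul_comm ζhat]
    gcongr
    rw [one_div]
  · intro i
    rw [h2]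
    simp only [Pi.smul_apply, smul_eq_mul, one_div, div_eq_mul_inv]
    nlinarith [mul_le_mul_of_nonneg_left (hdual i) (inv_nonneg.mpr hpos.le)]
  · rw [h4]
    have h2' : (0:ℝ) < nab ^ 2 := by positivity
    calc 1 / nab ^ 2 * ∑ i, (nab • cbar - Aᵀ.mulVec ybar) i * (xbar i + nab * xt i)
        ≤ 1 / nab ^ 2 * ζhat := by
          exact mul_le_mul_of_nonneg_left hcomp (by positivity)
      _ ≤ ζhat / nab := by
          rw [one_div, mul_comm, ← div_eq_mul_inv]
          gcongr <;> nlinarith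
end

section
/- Let A ∈ ℤ^{m×n} with rank(A) = m, b ∈ ℤ^m, c ∈ ℤ^n, and define the binary encoding length L := mn + m + n + Σ_{i,j} ⌈log₂(|A_{ij}| + 1)⌉ + Σ_i ⌈log₂(|c_i| + 1)⌉ + Σ_j ⌈log₂(|b_j| + 1)⌉. Let (x*, y*, s*) be an optimal basic primal–dual pair: A x* = b, x* ≥ 0, Aᵀ y* + s* = c, s* ≥ 0, (x*)ᵀ s* = 0, where x* is an extreme point of the primal feasible set {x ∈ ℝⁿ : A x = b, x ≥ 0} and (y*, s*) is an extreme point of the dual feasible set {(y, s) : Aᵀ y + s = c, s ≥ 0}. Then for every index i: if x*_i > 0 then x*_i ≥ 2^{−L}, and if s*_i > 0 then s*_i ≥ 2^{−L}. -/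
/-!
If `x` is a vertex of `{x | A x = b, x ≥ 0}`, the columns of `A` on the support of `x` are linearly
independent; if `(y, s)` is a vertex of `{(y, s) | Aᵀ y + s = c, s ≥ 0}`, then `y` is the only
solution of `(Aᵀ y)_j = c_j` for the `j` with `s_j = 0`. Either way, Cramer's rule on a nonsingular
square submatrix `Q` of `A` shows that `det Q` times each positive coordinate is a nonzero integer,
so that coordinate is at least `1 / |det Q|`. Expanding the determinant over permutations and
bounding these by all maps gives `|det Q| ≤ ∏ i j, (1 + |A i j|) ≤ 2 ^ L`.
-/

open Matrix Finset Filter Topology Function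

section DetBound

variable {R : Type*} [CommRing R] [LinearOrder R] [IsStrictOrderedRing R]

theorem Finset.one_add_sum_le_prod_one_add {α : Type*} (s : Finset α) {a : α → R}
    (ha : ∀ i ∈ s, 0 ≤ a i) : 1 + ∑ i ∈ s, a i ≤ ∏ i ∈ s, (1 + a i) := by
  classical
  induction s using Finset.induction_on with
  | empty => simp
  | insert j s hj ih =>
    rw [sum_insert hj, prod_insert hj]
    have hs := ih fun i hi => ha i (mem_insert_of_mem hi)
    have hj := ha j (mem_insert_self j s)
    have hsum : 0 ≤ ∑ i ∈ s, a i := sum_nonneg fun i hi => ha i (mem_insert_of_mem hi)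
    nlinarith [mul_le_mul_of_nonneg_left hs (by linarith : (0 : R) ≤ 1 + a j)]

theorem Fintype.prod_comp_le_prod_of_injective {α β : Type*} [Fintype α] [Fintype β]
    {e : α → β} (he : Injective e) {g : β → R} (hg : ∀ b, 1 ≤ g b) :
    ∏ a, g (e a) ≤ ∏ b, g b := by
  classical
  rw [← prod_image fun a _ a' _ h => he h]
  exact prod_le_prod_of_subset_of_one_le (subset_univ _)
    (fun b _ => zero_le_one.trans (hg b)) fun b _ _ => hg b

variable {ι κ μ : Type*} [Fintype ι] [Fintype κ] [Fintype μ] [DecidableEq μ]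

theorem Matrix.abs_det_le_prod_sum_abs (M : Matrix μ μ R) : |M.det| ≤ ∏ j, ∑ i, |M i j| := by
  calc |M.det| ≤ ∑ σ : Equiv.Perm μ, |(Equiv.Perm.sign σ : R) * ∏ j, M (σ j) j| := by
        rw [det_apply']; exact abs_sum_le_sum_abs _ _
  _ = ∑ σ : Equiv.Perm μ, ∏ j, |M (σ j) j| := sum_congr rfl fun σ _ => by
        rcases Int.units_eq_one_or (Equiv.Perm.sign σ) with h | h <;> simp [h, abs_prod]
  _ ≤ ∑ f : μ → μ, ∏ j, |M (f j) j| :=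
        (sum_map univ ⟨_, DFunLike.coe_injective⟩ fun f : μ → μ => ∏ j, |M (f j) j|).symm.trans_le
          (sum_le_univ_sum_of_nonneg fun f => prod_nonneg fun j _ => abs_nonneg _)
  _ = ∏ j, ∑ i, |M i j| := by rw [prod_univ_sum, Fintype.piFinset_univ]

theorem Matrix.abs_det_le_prod_prod_one_add_abs (M : Matrix μ μ R) :
    |M.det| ≤ ∏ i, ∏ j, (1 + |M i j|) := by
  refine M.abs_det_le_prod_sum_abs.trans ?_
  rw [Finset.prod_comm]
  refine prod_le_prod (fun j _ => sum_nonneg fun i _ => abs_nonneg _) fun j _ => ?_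
  linarith [one_add_sum_le_prod_one_add univ fun i (_ : i ∈ univ) => abs_nonneg (M i j)]

theorem Matrix.abs_det_submatrix_le_prod_prod_one_add_abs (A : Matrix ι κ R) {r : μ → ι}
    {c : μ → κ} (hr : Injective r) (hc : Injective c) :
    |(A.submatrix r c).det| ≤ ∏ i, ∏ j, (1 + |A i j|) := by
  have h1 : ∀ i j, 1 ≤ 1 + |A i j| := fun i j => le_add_of_nonneg_right (abs_nonneg _)
  calc |(A.submatrix r c).det| ≤ ∏ a, ∏ b, (1 + |A (r a) (c b)|) :=
        abs_det_le_prod_prod_one_add_abs _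
  _ ≤ ∏ a, ∏ j, (1 + |A (r a) j|) :=
        prod_le_prod (fun a _ => prod_nonneg fun b _ => zero_le_one.trans (h1 _ _))
          fun a _ => Fintype.prod_comp_le_prod_of_injective hc (h1 _)
  _ ≤ ∏ i, ∏ j, (1 + |A i j|) :=
        Fintype.prod_comp_le_prod_of_injective hr fun i => one_le_prod fun j _ => h1 i j

end DetBound

section Cramer

variable {ι κ : Type*} [Fintype ι] [Fintype κ] [DecidableEq κ]

theorem Matrix.exists_submatrix_det_ne_zero {K : Type*} [Field K] (N : Matrix ι κ K)
    (hN : ∀ v, N *ᵥ v = 0 → v = 0) :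
    ∃ r : κ → ι, Injective r ∧ (N.submatrix r id).det ≠ 0 := by
  have hrank : N.rank = Fintype.card κ := by
    rw [Matrix.rank, LinearMap.finrank_range_of_inj ((injective_iff_map_eq_zero N.mulVecLin).2 hN),
      Module.finrank_fintype_fun_eq_card]
  have hspan : Submodule.span K (Set.range N.row) = ⊤ :=
    Submodule.eq_top_of_finrank_eq <| by
      rw [← rank_eq_finrank_span_row, hrank, Module.finrank_fintype_fun_eq_card]
  obtain ⟨μ, a, ha, hspan_a, hli⟩ := exists_linearIndependent' K N.row
  have : Fintype μ := Fintype.ofInjective a ha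
  have hcard : Fintype.card κ = Fintype.card μ := by
    rw [linearIndependent_iff_card_eq_finrank_span.1 hli, Set.finrank, hspan_a, hspan,
      finrank_top, Module.finrank_fintype_fun_eq_card]
  let e := Fintype.equivOfCardEq hcard
  refine ⟨a ∘ e, ha.comp e.injective, ?_⟩
  have hrows : LinearIndependent K (N.submatrix (a ∘ e) id).row := hli.comp e e.injective
  exact ((isUnit_iff_isUnit_det _).1 (linearIndependent_rows_iff_isUnit.1 hrows)).ne_zero

theorem Matrix.exists_submatrix_det_smul_eq_intCast (M : Matrix ι κ ℤ)
    (hM : ∀ v, M.map (Int.cast : ℤ → ℝ) *ᵥ v = 0 → v = 0) {b : ι → ℤ} {v : κ → ℝ}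
    (hv : M.map (Int.cast : ℤ → ℝ) *ᵥ v = fun i => (b i : ℝ)) :
    ∃ r : κ → ι, Injective r ∧ (M.submatrix r id).det ≠ 0 ∧
      ∃ z : κ → ℤ, ((M.submatrix r id).det : ℝ) • v = fun t => (z t : ℝ) := by
  obtain ⟨r, hr, hdet⟩ := (M.map (Int.cast : ℤ → ℝ)).exists_submatrix_det_ne_zero hM
  set Q := M.submatrix r id
  have hQ : (M.map (Int.cast : ℤ → ℝ)).submatrix r id = (Int.castRingHom ℝ).mapMatrix Q := rfl
  have hdetQ : ((M.map (Int.cast : ℤ → ℝ)).submatrix r id).det = (Q.det : ℝ) := by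
    rw [hQ, ← RingHom.map_det]; rfl
  refine ⟨r, hr, fun h => hdet (by rw [hdetQ, h, Int.cast_zero]), Q.adjugate *ᵥ (b ∘ r), ?_⟩
  set Q' := (Int.castRingHom ℝ).mapMatrix Q
  have hQv : Q' *ᵥ v = Int.cast ∘ b ∘ r := by
    rw [← hQ]; funext t; exact congrFun hv (r t)
  calc (Q.det : ℝ) • v = Q'.det • v := by rw [← hdetQ, hQ]
  _ = Q'.adjugate *ᵥ (Q' *ᵥ v) := by rw [mulVec_mulVec, adjugate_mul, smul_mulVec, one_mulVec]
  _ = (Q.adjugate.map (Int.cast : ℤ → ℝ)) *ᵥ (Int.cast ∘ b ∘ r) := by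
        rw [hQv, ← RingHom.map_adjugate]; rfl
  _ = fun t => ((Q.adjugate *ᵥ (b ∘ r)) t : ℝ) :=
        funext fun t => ((Int.castRingHom ℝ).map_mulVec _ _ t).symm

theorem inv_le_of_intCast_mul_eq_intCast {D z : ℤ} {x P : ℝ} (hD : D ≠ 0) (hDP : |(D : ℝ)| ≤ P)
    (hx : 0 < x) (h : (D : ℝ) * x = z) : P⁻¹ ≤ x := by
  have hz : z ≠ 0 := by
    rintro rfl
    simp [hD, hx.ne'] at h
  have hP : 0 < P := (abs_pos.2 (Int.cast_ne_zero.2 hD)).trans_le hDP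
  rw [inv_le_iff_one_le_mul₀ hP]
  calc (1 : ℝ) ≤ |(z : ℝ)| := by exact_mod_cast Int.one_le_abs hz
  _ = |(D : ℝ)| * x := by rw [← h, abs_mul, abs_of_pos hx]
  _ ≤ x * P := by rw [mul_comm]; exact mul_le_mul_of_nonneg_left hDP hx.le

end Cramer

theorem eq_zero_of_add_mem_of_sub_mem_of_mem_extremePoints {𝕜 E : Type*} [Field 𝕜]
    [LinearOrder 𝕜] [IsStrictOrderedRing 𝕜] [AddCommGroup E] [Module 𝕜 E] {S : Set E} {x v : E}
    (hx : x ∈ S.extremePoints 𝕜) (hadd : x + v ∈ S) (hsub : x - v ∈ S) : v = 0 := by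
  have := invertibleOfNonzero (two_ne_zero' 𝕜)
  simpa using hx.2 hadd hsub (mem_openSegment_add_sub x v)

theorem exists_pos_forall_abs_mul_le {ι : Type*} [Finite ι] {x d : ι → ℝ} (hx : ∀ i, 0 ≤ x i)
    (hd : ∀ i, x i = 0 → d i = 0) : ∃ ε : ℝ, 0 < ε ∧ ∀ i, |ε * d i| ≤ x i := by
  have hev : ∀ i, ∀ᶠ ε in 𝓝 (0 : ℝ), |ε * d i| ≤ x i := fun i => by
    rcases (hx i).eq_or_lt with h | h
    · simp [hd i h.symm, ← h]
    · have hlim : Tendsto (fun ε : ℝ => |ε * d i|) (𝓝 0) (𝓝 0) := by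
        simpa using ((continuous_id.mul continuous_const).abs.tendsto (0 : ℝ) :)
      exact hlim.eventually (eventually_le_nhds h)
  obtain ⟨ε, hε, hεpos⟩ := ((eventually_all.2 hev).filter_mono nhdsWithin_le_nhds).and
    (self_mem_nhdsWithin : ∀ᶠ ε in 𝓝[>] (0 : ℝ), 0 < ε) |>.exists
  exact ⟨ε, hεpos, hε⟩

section Polyhedra

variable {ι κ : Type*} [Fintype κ]

def primalPolyhedron (A : Matrix ι κ ℝ) (b : ι → ℝ) : Set (κ → ℝ) :=
  {x | A *ᵥ x = b ∧ ∀ j, 0 ≤ x j}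

def dualPolyhedron [Fintype ι] (A : Matrix ι κ ℝ) (c : κ → ℝ) : Set ((ι → ℝ) × (κ → ℝ)) :=
  {p | Aᵀ *ᵥ p.1 + p.2 = c ∧ ∀ j, 0 ≤ p.2 j}

theorem Matrix.mulVec_eq_submatrix_mulVec_of_eq_zero {R : Type*} [NonUnitalNonAssocSemiring R]
    (A : Matrix ι κ R) (p : κ → Prop) [DecidablePred p] {x : κ → R} (hx : ∀ j, ¬ p j → x j = 0) :
    A *ᵥ x = A.submatrix id (Subtype.val : Subtype p → κ) *ᵥ fun j => x j := by
  funext i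
  simp only [mulVec, dotProduct, submatrix_apply, id_eq]
  rw [← Fintype.sum_subtype_add_sum_subtype p, Fintype.sum_eq_zero
    (fun t : {j // ¬ p j} => A i t * x t) fun t => by rw [hx t t.2, mul_zero], add_zero]

theorem eq_zero_of_mulVec_submatrix_support_eq_zero {A : Matrix ι κ ℝ} {b : ι → ℝ}
    {x : κ → ℝ} (hx : x ∈ (primalPolyhedron A b).extremePoints ℝ) {g : {j // x j ≠ 0} → ℝ}
    (hg : A.submatrix id Subtype.val *ᵥ g = 0) : g = 0 := by
  classical
  obtain ⟨hAx, hx0⟩ := hx.1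
  let d : κ → ℝ := fun j => if h : x j ≠ 0 then g ⟨j, h⟩ else 0
  have hdg : (fun t : {j // x j ≠ 0} => d t) = g := funext fun t => dif_pos t.2
  have hAd : A *ᵥ d = 0 := by
    rw [A.mulVec_eq_submatrix_mulVec_of_eq_zero (fun j => x j ≠ 0) fun j hj => dif_neg hj, hdg, hg]
  obtain ⟨ε, hε, hεd⟩ :=
    exists_pos_forall_abs_mul_le (d := d) hx0 fun j hj => dif_neg (not_not.2 hj)
  have hbound := fun j => abs_le.1 (hεd j)
  have hadd : x + ε • d ∈ primalPolyhedron A b :=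
    ⟨by rw [mulVec_add, mulVec_smul, hAd, smul_zero, add_zero, hAx], fun j => by
      simp only [Pi.add_apply, Pi.smul_apply, smul_eq_mul]; linarith [hbound j]⟩
  have hsub : x - ε • d ∈ primalPolyhedron A b :=
    ⟨by rw [mulVec_sub, mulVec_smul, hAd, smul_zero, sub_zero, hAx], fun j => by
      simp only [Pi.sub_apply, Pi.smul_apply, smul_eq_mul]; linarith [hbound j]⟩
  have hεd0 := eq_zero_of_add_mem_of_sub_mem_of_mem_extremePoints hx hadd hsub
  rw [← hdg, (smul_eq_zero_iff_right hε.ne').1 hεd0]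
  rfl

theorem eq_zero_of_transpose_mulVec_submatrix_eq_zero [Fintype ι] {A : Matrix ι κ ℝ}
    {c : κ → ℝ} {y : ι → ℝ} {s : κ → ℝ} (h : (y, s) ∈ (dualPolyhedron A c).extremePoints ℝ)
    {g : ι → ℝ} (hg : Aᵀ.submatrix (Subtype.val : {j // s j = 0} → κ) id *ᵥ g = 0) : g = 0 := by
  obtain ⟨hAys, hs0⟩ := h.1
  set u := Aᵀ *ᵥ g
  obtain ⟨ε, hε, hεu⟩ :=
    exists_pos_forall_abs_mul_le (d := u) hs0 fun j hj => congrFun hg ⟨j, hj⟩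
  have hbound := fun j => abs_le.1 (hεu j)
  have hadd : (y, s) + ε • (g, -u) ∈ dualPolyhedron A c := by
    refine ⟨?_, fun j => ?_⟩
    · simp only [Prod.fst_add, Prod.snd_add, Prod.smul_mk, mulVec_add, mulVec_smul, ← hAys]
      module
    · simp only [Prod.snd_add, Prod.smul_mk, Pi.add_apply, Pi.smul_apply, Pi.neg_apply,
        smul_eq_mul]
      linarith [hbound j]
  have hsub : (y, s) - ε • (g, -u) ∈ dualPolyhedron A c := by
    refine ⟨?_, fun j => ?_⟩
    · simp only [Prod.fst_sub, Prod.snd_sub, Prod.smul_mk, mulVec_sub, mulVec_smul, ← hAys]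
      module
    · simp only [Prod.snd_sub, Prod.smul_mk, Pi.sub_apply, Pi.smul_apply, Pi.neg_apply,
        smul_eq_mul]
      linarith [hbound j]
  have hεg := congrArg Prod.fst (eq_zero_of_add_mem_of_sub_mem_of_mem_extremePoints h hadd hsub)
  exact (smul_eq_zero_iff_right hε.ne').1 hεg

variable [Fintype ι]

theorem inv_prod_one_add_abs_le_of_mem_extremePoints_primalPolyhedron (A : Matrix ι κ ℤ)
    (b : ι → ℤ) {x : κ → ℝ}
    (hx : x ∈ (primalPolyhedron (A.map Int.cast) fun i => (b i : ℝ)).extremePoints ℝ) {j : κ}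
    (hj : 0 < x j) : (∏ i, ∏ j, (1 + |(A i j : ℝ)|))⁻¹ ≤ x j := by
  classical
  let M := A.submatrix id (Subtype.val : {j // x j ≠ 0} → κ)
  have hMx : M.map (Int.cast : ℤ → ℝ) *ᵥ (fun t => x t) = fun i => (b i : ℝ) := by
    rw [← hx.1.1, (A.map Int.cast).mulVec_eq_submatrix_mulVec_of_eq_zero (fun j => x j ≠ 0)
      fun j hj => not_not.1 hj]
    rfl
  obtain ⟨r, hr, hdet, z, hz⟩ := M.exists_submatrix_det_smul_eq_intCast
    (fun g hg => eq_zero_of_mulVec_submatrix_support_eq_zero hx hg) hMx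
  refine inv_le_of_intCast_mul_eq_intCast hdet ?_ hj (congrFun hz ⟨j, hj.ne'⟩)
  have hcast : (((M.submatrix r id).det : ℤ) : ℝ)
      = ((A.map (Int.cast : ℤ → ℝ)).submatrix r Subtype.val).det :=
    (Int.castRingHom ℝ).map_det _
  rw [hcast]
  exact (A.map (Int.cast : ℤ → ℝ)).abs_det_submatrix_le_prod_prod_one_add_abs hr
    Subtype.val_injective

theorem inv_prod_one_add_abs_le_of_mem_extremePoints_dualPolyhedron (A : Matrix ι κ ℤ)
    (c : κ → ℤ) {y : ι → ℝ} {s : κ → ℝ}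
    (h : (y, s) ∈ (dualPolyhedron (A.map Int.cast) fun j => (c j : ℝ)).extremePoints ℝ)
    {j : κ} (hj : 0 < s j) : (∏ i, ∏ j, (1 + |(A i j : ℝ)|))⁻¹ ≤ s j := by
  classical
  let M := Aᵀ.submatrix (Subtype.val : {j // s j = 0} → κ) id
  have hAys : (A.map (Int.cast : ℤ → ℝ))ᵀ *ᵥ y + s = fun j => (c j : ℝ) := h.1.1
  have hMy : M.map (Int.cast : ℤ → ℝ) *ᵥ y = fun t => (c t.1 : ℝ) := by
    funext t
    have ht := congrFun hAys t
    rw [Pi.add_apply, t.2, add_zero] at ht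
    exact ht
  obtain ⟨r, hr, hdet, z, hz⟩ := M.exists_submatrix_det_smul_eq_intCast
    (fun g hg => eq_zero_of_transpose_mulVec_submatrix_eq_zero h hg) hMy
  set D := (M.submatrix r id).det
  have hs : s j = c j - ((A.map (Int.cast : ℤ → ℝ))ᵀ *ᵥ y) j := by
    linarith [congrFun hAys j, Pi.add_apply ((A.map (Int.cast : ℤ → ℝ))ᵀ *ᵥ y) s j]
  have hDs : (D : ℝ) * s j = ((D * c j - (Aᵀ *ᵥ z) j : ℤ) : ℝ) := by
    calc (D : ℝ) * s j = D * c j - ((A.map (Int.cast : ℤ → ℝ))ᵀ *ᵥ ((D : ℝ) • y)) j := by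
          rw [hs, mulVec_smul, Pi.smul_apply, smul_eq_mul]; ring
    _ = _ := by
          rw [hz]
          push_cast [mulVec, dotProduct]
          rfl
  refine inv_le_of_intCast_mul_eq_intCast hdet ?_ hj hDs
  have hcast : ((D : ℤ) : ℝ)
      = ((A.map (Int.cast : ℤ → ℝ))ᵀ.submatrix (Subtype.val ∘ r) id).det :=
    (Int.castRingHom ℝ).map_det _
  rw [hcast, Finset.prod_comm]
  exact (A.map (Int.cast : ℤ → ℝ))ᵀ.abs_det_submatrix_le_prod_prod_one_add_abs
    (Subtype.val_injective.comp hr) injective_id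

end Polyhedra

theorem one_add_abs_le_two_zpow_ceil_logb (a : ℝ) :
    1 + |a| ≤ (2 : ℝ) ^ ⌈Real.logb 2 (|a| + 1)⌉ := by
  calc 1 + |a| = (2 : ℝ) ^ Real.logb 2 (|a| + 1) := by
        rw [Real.rpow_logb two_pos (by norm_num) (by positivity), add_comm]
  _ ≤ (2 : ℝ) ^ (⌈Real.logb 2 (|a| + 1)⌉ : ℝ) :=
        Real.rpow_le_rpow_of_exponent_le one_le_two (Int.le_ceil _)
  _ = (2 : ℝ) ^ ⌈Real.logb 2 (|a| + 1)⌉ := Real.rpow_intCast 2 _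

theorem ceil_logb_abs_add_one_nonneg (a : ℝ) : 0 ≤ ⌈Real.logb 2 (|a| + 1)⌉ :=
  Int.ceil_nonneg (Real.logb_nonneg one_lt_two (le_add_of_nonneg_left (abs_nonneg a)))

theorem prod_one_add_abs_le_two_zpow_sum_ceil_logb {α : Type*} (s : Finset α) (a : α → ℝ) :
    ∏ i ∈ s, (1 + |a i|) ≤ (2 : ℝ) ^ ∑ i ∈ s, ⌈Real.logb 2 (|a i| + 1)⌉ := by
  classical
  induction s using Finset.induction_on with
  | empty => simp
  | insert j s hj ih =>
    rw [prod_insert hj, sum_insert hj, zpow_add₀ two_ne_zero]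
    exact mul_le_mul (one_add_abs_le_two_zpow_ceil_logb _) ih
      (prod_nonneg fun i _ => by positivity) (by positivity)

theorem khachiyan_lower_bound_general
    {m n : ℕ}
    (A : Matrix (Fin m) (Fin n) ℤ) (b : Fin m → ℤ) (c : Fin n → ℤ)
    (L : ℤ)
    (hL : L = (m * n + m + n : ℤ)
        + ∑ i, ∑ j, ⌈Real.logb 2 ((|A i j| : ℝ) + 1)⌉
        + ∑ i, ⌈Real.logb 2 ((|c i| : ℝ) + 1)⌉
        + ∑ j, ⌈Real.logb 2 ((|b j| : ℝ) + 1)⌉)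
    (xstar : Fin n → ℝ) (ystar : Fin m → ℝ) (sstar : Fin n → ℝ)
    (hxext : xstar ∈ Set.extremePoints ℝ
        {x : Fin n → ℝ |
          (A.map (Int.cast : ℤ → ℝ)).mulVec x = (fun j => (b j : ℝ)) ∧
          ∀ i, 0 ≤ x i})
    (hysext : (ystar, sstar) ∈ Set.extremePoints ℝ
        {p : (Fin m → ℝ) × (Fin n → ℝ) |
          (A.map (Int.cast : ℤ → ℝ))ᵀ.mulVec p.1 + p.2 = (fun i => (c i : ℝ)) ∧
          ∀ i, 0 ≤ p.2 i}) :
    ∀ i, (0 < xstar i → (2 : ℝ) ^ (-L) ≤ xstar i) ∧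
         (0 < sstar i → (2 : ℝ) ^ (-L) ≤ sstar i) := by
  set E := ∑ i, ∑ j, ⌈Real.logb 2 ((|A i j| : ℝ) + 1)⌉
  have hEL : E ≤ L := by
    have hc := sum_nonneg fun i (_ : i ∈ univ) => ceil_logb_abs_add_one_nonneg (c i : ℝ)
    have hb := sum_nonneg fun j (_ : j ∈ univ) => ceil_logb_abs_add_one_nonneg (b j : ℝ)
    have hmn : (0 : ℤ) ≤ m * n + m + n := by positivity
    rw [hL]
    linarith
  have hPE : ∏ i, ∏ j, (1 + |(A i j : ℝ)|) ≤ 2 ^ E := by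
    have := prod_one_add_abs_le_two_zpow_sum_ceil_logb (univ ×ˢ univ) fun p => (A p.1 p.2 : ℝ)
    rwa [prod_product, sum_product] at this
  have h2L : (2 : ℝ) ^ (-L) ≤ (∏ i, ∏ j, (1 + |(A i j : ℝ)|))⁻¹ := by
    rw [_root_.zpow_neg]
    exact inv_anti₀ (prod_pos fun i _ => prod_pos fun j _ => by positivity)
      (hPE.trans (zpow_le_zpow_right₀ one_le_two hEL))
  exact fun i =>
    ⟨fun hi => h2L.trans
      (inv_prod_one_add_abs_le_of_mem_extremePoints_primalPolyhedron A b hxext hi),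
    fun hi => h2L.trans
      (inv_prod_one_add_abs_le_of_mem_extremePoints_dualPolyhedron A c hysext hi)⟩

/-- Khachiyan's lower bound on the nonzero coordinates of basic
(extreme point) optimal solutions of a linear optimization problem with
integer data: every positive coordinate of a basic optimal primal–dual pair is
at least `2^{−L}`, where `L` is the binary encoding length of the data. -/
theorem khachiyan_lower_bound
    {m n : ℕ}
    (A : Matrix (Fin m) (Fin n) ℤ) (b : Fin m → ℤ) (c : Fin n → ℤ)
    (hrank : (A.map (Int.cast : ℤ → ℝ)).rank = m)
    (L : ℤ)
    (hL : L = (m * n + m + n : ℤ)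
        + ∑ i, ∑ j, ⌈Real.logb 2 ((|A i j| : ℝ) + 1)⌉
        + ∑ i, ⌈Real.logb 2 ((|c i| : ℝ) + 1)⌉
        + ∑ j, ⌈Real.logb 2 ((|b j| : ℝ) + 1)⌉)
    (xstar : Fin n → ℝ) (ystar : Fin m → ℝ) (sstar : Fin n → ℝ)
    (hPfeas : (A.map (Int.cast : ℤ → ℝ)).mulVec xstar = fun j => (b j : ℝ))
    (hxpos : ∀ i, 0 ≤ xstar i)
    (hDfeas : (A.map (Int.cast : ℤ → ℝ))ᵀ.mulVec ystar + sstar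
        = fun i => (c i : ℝ))
    (hspos : ∀ i, 0 ≤ sstar i)
    (hcomp : ∑ i, xstar i * sstar i = 0)
    (hxext : xstar ∈ Set.extremePoints ℝ
        {x : Fin n → ℝ |
          (A.map (Int.cast : ℤ → ℝ)).mulVec x = (fun j => (b j : ℝ)) ∧
          ∀ i, 0 ≤ x i})
    (hysext : (ystar, sstar) ∈ Set.extremePoints ℝ
        {p : (Fin m → ℝ) × (Fin n → ℝ) |
          (A.map (Int.cast : ℤ → ℝ))ᵀ.mulVec p.1 + p.2 = (fun i => (c i : ℝ)) ∧
          ∀ i, 0 ≤ p.2 i}) :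
    ∀ i, (0 < xstar i → (2 : ℝ) ^ (-L) ≤ xstar i) ∧
         (0 < sstar i → (2 : ℝ) ^ (-L) ≤ sstar i) :=
  khachiyan_lower_bound_general A b c L hL xstar ystar sstar hxext hysext
end
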